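/- arXiv:1107.1679 — 12 statements merged into one kernel-verified Lean document; each statement's English description precedes it below -/
import Mathlib

section
/- Let ℐ := {(p,q) ∈ ℝ² : (p−1)² ≤ q < p²} and define ψ : ℐ → ℝ² by ψ(p,q) = ((√2/2)·√(p²−q), (√2/2)·√(q−(p−1)²)). Then ψ is a bijection from ℐ onto (0,∞) × [0,∞). -/
/-- The map `ψ(p,q) = ((√2/2)√(p²−q), (√2/2)√(q−(p−1)²))` is a bijection
from `ℐ = {(p,q) : (p−1)² ≤ q < p²}` onto `(0,∞) × [0,∞)`. -/
theorem stmt_4 :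
    Set.BijOn
      (fun pq : ℝ × ℝ =>
        (Real.sqrt 2 / 2 * Real.sqrt (pq.1 ^ 2 - pq.2),
         Real.sqrt 2 / 2 * Real.sqrt (pq.2 - (pq.1 - 1) ^ 2)))
      {pq : ℝ × ℝ | (pq.1 - 1) ^ 2 ≤ pq.2 ∧ pq.2 < pq.1 ^ 2}
      (Set.Ioi (0 : ℝ) ×ˢ Set.Ici (0 : ℝ)) := by
  have h2 : (0:ℝ) < Real.sqrt 2 / 2 := by positivity
  refine ⟨?_, ?_, ?_⟩
  · rintro ⟨p, q⟩ ⟨h1, h3⟩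
    constructor
    · exact mul_pos h2 (Real.sqrt_pos.mpr (by dsimp at *; linarith))
    · exact mul_nonneg h2.le (Real.sqrt_nonneg _)
  · rintro ⟨p, q⟩ ⟨h1, h3⟩ ⟨p', q'⟩ ⟨h1', h3'⟩ heq
    dsimp at *
    have e1 : Real.sqrt (p ^ 2 - q) = Real.sqrt (p' ^ 2 - q') := by
      have := congrArg Prod.fst heq
      dsimp at this
      exact mul_left_cancel₀ h2.ne' this
    have e2 : Real.sqrt (q - (p - 1) ^ 2) = Real.sqrt (q' - (p' - 1) ^ 2) := by
      have := congrArg Prod.snd heq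
      dsimp at this
      exact mul_left_cancel₀ h2.ne' this
    have s1 : p ^ 2 - q = p' ^ 2 - q' := by
      have := congrArg (· ^ 2) e1
      rwa [Real.sq_sqrt (by linarith), Real.sq_sqrt (by linarith)] at this
    have s2 : q - (p - 1) ^ 2 = q' - (p' - 1) ^ 2 := by
      have := congrArg (· ^ 2) e2
      rwa [Real.sq_sqrt (by linarith), Real.sq_sqrt (by linarith)] at this
    have hp : p = p' := by nlinarith [s1, s2]
    have hq : q = q' := by nlinarith [s1, hp]
    exact Prod.ext hp hq
  · rintro ⟨x, y⟩ ⟨hx, hy⟩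
    simp only [Set.mem_Ioi, Set.mem_Ici] at hx hy
    refine ⟨(x ^ 2 + y ^ 2 + 1 / 2, (x ^ 2 + y ^ 2 + 1 / 2) ^ 2 - 2 * x ^ 2), ⟨?_, ?_⟩, ?_⟩
    · dsimp; nlinarith
    · dsimp; nlinarith
    · have key : ∀ t : ℝ, 0 ≤ t → Real.sqrt 2 / 2 * Real.sqrt (2 * t ^ 2) = t := by
        intro t ht
        rw [Real.sqrt_mul (by norm_num), Real.sqrt_sq ht]
        rw [div_mul_eq_mul_div, ← mul_assoc, Real.mul_self_sqrt (by norm_num)]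
        ring
      have e1 : (x ^ 2 + y ^ 2 + 1 / 2) ^ 2 - ((x ^ 2 + y ^ 2 + 1 / 2) ^ 2 - 2 * x ^ 2)
          = 2 * x ^ 2 := by ring
      have e2 : ((x ^ 2 + y ^ 2 + 1 / 2) ^ 2 - 2 * x ^ 2) - (x ^ 2 + y ^ 2 + 1 / 2 - 1) ^ 2
          = 2 * y ^ 2 := by ring
      simp only [Prod.mk.injEq]
      constructor
      · rw [e1]; exact key x hx.le
      · rw [e2]; exact key y hy
end

section
/- Let p, q be real numbers with 0 ≤ q < p² and √q < p, and set J_{p,q} := (−√(p−√q), √(p−√q)) and h_{p,q}(s) := √(p − s² + √((p − s²)² − q)). Then on J_{p,q} both y = h_{p,q} and y = 1/h_{p,q} are twice differentiable and satisfy the ordinary differential equation s·((s²−p)²−q)·y''(s) + (s⁴−p²+q)·y'(s) − s³·y(s) = 0. -/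
/-! Write `W = √((p - s²)² - q)`, so that `h² = p - s² + W`. Differentiating gives
`h' = -s h / W`, hence `(1/h)' = s (1/h) / W`. Any `y` with `y' = ε s y / W`, `ε = ±1`, solves
the equation: differentiating once more, `W W' = -2 s (p - s²)` and `W² = (s² - p)² - q` reduce it
to a polynomial identity in `s, y, W, ε`. -/

open Real Filter Set Topology

lemma HasDerivAt.fun_inv_of_mul_self {y : ℝ → ℝ} {c t : ℝ}
    (hy : HasDerivAt y (c * y t) t) (ht : y t ≠ 0) :
    HasDerivAt (fun x => (y x)⁻¹) (-c * (y t)⁻¹) t := by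
  refine (hy.fun_inv ht).congr_deriv ?_
  field_simp

lemma hasDerivAt_const_sub_sq (p t : ℝ) : HasDerivAt (fun x => p - x ^ 2) (-(2 * t)) t := by
  simpa using (hasDerivAt_pow 2 t).const_sub p

section

variable {p q : ℝ}

lemma sqrt_lt_sub_sq_of_mem_Ioo {s : ℝ} (hs : s ∈ Ioo (-√(p - √q)) √(p - √q)) :
    √q < p - s ^ 2 := by
  linarith [Real.sq_lt.2 hs]

lemma sq_sub_pos_of_sqrt_lt {a : ℝ} (h : √q < a) : 0 < a ^ 2 - q := by
  nlinarith [sq_sqrt' (x := q), le_max_left q 0, sqrt_nonneg q]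

lemma hasDerivAt_sqrt_sub_sq_sq_sub {t : ℝ} (hw : 0 < (p - t ^ 2) ^ 2 - q) :
    HasDerivAt (fun x => √((p - x ^ 2) ^ 2 - q))
      (-2 * t * (p - t ^ 2) / √((p - t ^ 2) ^ 2 - q)) t := by
  have hu := hasDerivAt_const_sub_sq p t
  refine (((hu.fun_pow 2).sub_const q).sqrt hw.ne').congr_deriv ?_
  field_simp
  push_cast
  ring

lemma sub_sq_add_sqrt_pos {t : ℝ} (ht : √q < p - t ^ 2) :
    0 < p - t ^ 2 + √((p - t ^ 2) ^ 2 - q) := by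
  linarith [sqrt_nonneg q, sqrt_nonneg ((p - t ^ 2) ^ 2 - q)]

lemma hasDerivAt_sqrt_add_sqrt {t : ℝ} (ht : √q < p - t ^ 2) :
    HasDerivAt (fun x => √(p - x ^ 2 + √((p - x ^ 2) ^ 2 - q)))
      (-1 * t / √((p - t ^ 2) ^ 2 - q) * √(p - t ^ 2 + √((p - t ^ 2) ^ 2 - q))) t := by
  have hw := sq_sub_pos_of_sqrt_lt ht
  have hf := sub_sq_add_sqrt_pos ht
  have hu := hasDerivAt_const_sub_sq p t
  refine ((hu.fun_add (hasDerivAt_sqrt_sub_sq_sq_sub hw)).sqrt hf.ne').congr_deriv ?_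
  have hH2 := sq_sqrt hf.le
  field_simp
  linear_combination t * hH2

lemma ode_of_eventually_hasDerivAt {ε s : ℝ} {y : ℝ → ℝ} (hε : ε ^ 2 = 1)
    (hw : 0 < (p - s ^ 2) ^ 2 - q)
    (hy : ∀ᶠ t in 𝓝 s, HasDerivAt y (ε * t / √((p - t ^ 2) ^ 2 - q) * y t) t) :
    DifferentiableAt ℝ y s ∧ DifferentiableAt ℝ (deriv y) s ∧
      s * ((s ^ 2 - p) ^ 2 - q) * deriv (deriv y) s
        + (s ^ 4 - p ^ 2 + q) * deriv y s - s ^ 3 * y s = 0 := by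
  have hys := hy.self_of_nhds
  have hdy : deriv y =ᶠ[𝓝 s] fun t => ε * t / √((p - t ^ 2) ^ 2 - q) * y t :=
    hy.mono fun t ht => ht.deriv
  have hW := sqrt_pos.2 hw
  have hd2 := ((((hasDerivAt_id' s).const_mul ε).fun_div (hasDerivAt_sqrt_sub_sq_sq_sub hw)
    hW.ne').mul hys).congr_of_eventuallyEq hdy
  refine ⟨hys.differentiableAt, hd2.differentiableAt, ?_⟩
  rw [hd2.deriv, hys.deriv]
  set W := √((p - s ^ 2) ^ 2 - q)
  have hW2 : W ^ 2 = (p - s ^ 2) ^ 2 - q := sq_sqrt hw.le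
  rw [show (s ^ 2 - p) ^ 2 - q = W ^ 2 by rw [hW2]; ring]
  field_simp
  linear_combination (s * ε * y s) * hW2 + (s ^ 3 * y s * W) * hε

end

theorem stmt_5_general (p q : ℝ)
    (h : ℝ → ℝ)
    (hdef : ∀ s, h s = Real.sqrt (p - s ^ 2 + Real.sqrt ((p - s ^ 2) ^ 2 - q))) :
    ∀ s ∈ Set.Ioo (-Real.sqrt (p - Real.sqrt q)) (Real.sqrt (p - Real.sqrt q)),
      (DifferentiableAt ℝ h s ∧ DifferentiableAt ℝ (deriv h) s ∧
        s * ((s ^ 2 - p) ^ 2 - q) * deriv (deriv h) s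
          + (s ^ 4 - p ^ 2 + q) * deriv h s - s ^ 3 * h s = 0) ∧
      (DifferentiableAt ℝ (fun t => (h t)⁻¹) s ∧
        DifferentiableAt ℝ (deriv fun t => (h t)⁻¹) s ∧
        s * ((s ^ 2 - p) ^ 2 - q) * deriv (deriv fun t => (h t)⁻¹) s
          + (s ^ 4 - p ^ 2 + q) * deriv (fun t => (h t)⁻¹) s - s ^ 3 * (h s)⁻¹ = 0) := by
  obtain rfl : h = _ := funext hdef
  intro s hs
  have hw := sq_sub_pos_of_sqrt_lt (sqrt_lt_sub_sq_of_mem_Ioo hs)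
  have hnear : ∀ᶠ t in 𝓝 s, √q < p - t ^ 2 :=
    eventually_of_mem (isOpen_Ioo.mem_nhds hs) fun t ht => sqrt_lt_sub_sq_of_mem_Ioo ht
  have hh := hnear.mono fun t ht => hasDerivAt_sqrt_add_sqrt ht
  refine ⟨ode_of_eventually_hasDerivAt (by norm_num) hw hh, ode_of_eventually_hasDerivAt (ε := 1) (by norm_num) hw ?_⟩
  filter_upwards [hh, hnear] with t hht ht
  convert hht.fun_inv_of_mul_self (sqrt_pos.2 (sub_sq_add_sqrt_pos ht)).ne' using 1
  ring

/-- For `0 ≤ q < p²` with `√q < p`, on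
`J_{p,q} = (−√(p−√q), √(p−√q))` both `h_{p,q}` and `1/h_{p,q}`, where
`h_{p,q}(s) = √(p − s² + √((p − s²)² − q))`, are twice differentiable and satisfy
`s((s²−p)²−q) y'' + (s⁴−p²+q) y' − s³ y = 0`. -/
theorem stmt_5 (p q : ℝ) (hq0 : 0 ≤ q) (hq : q < p ^ 2) (hp : Real.sqrt q < p)
    (h : ℝ → ℝ)
    (hdef : ∀ s, h s = Real.sqrt (p - s ^ 2 + Real.sqrt ((p - s ^ 2) ^ 2 - q))) :
    ∀ s ∈ Set.Ioo (-Real.sqrt (p - Real.sqrt q)) (Real.sqrt (p - Real.sqrt q)),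
      (DifferentiableAt ℝ h s ∧ DifferentiableAt ℝ (deriv h) s ∧
        s * ((s ^ 2 - p) ^ 2 - q) * deriv (deriv h) s
          + (s ^ 4 - p ^ 2 + q) * deriv h s - s ^ 3 * h s = 0) ∧
      (DifferentiableAt ℝ (fun t => (h t)⁻¹) s ∧
        DifferentiableAt ℝ (deriv fun t => (h t)⁻¹) s ∧
        s * ((s ^ 2 - p) ^ 2 - q) * deriv (deriv fun t => (h t)⁻¹) s
          + (s ^ 4 - p ^ 2 + q) * deriv (fun t => (h t)⁻¹) s - s ^ 3 * (h s)⁻¹ = 0) :=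
  stmt_5_general p q h hdef
end

section
/- Let p, q ∈ ℝ with p² > q, let I be a nonempty open interval such that (s²−p)² − q > 0 for all s ∈ I, and let α₁, α₂ : I → ℝ be twice differentiable, linearly independent (over ℝ, as functions on I) solutions of the ODE s·((s²−p)²−q)·α''(s) + (s⁴−p²+q)·α'(s) − s³·α(s) = 0 on I, satisfying s² + α₁(s)² + α₂(s)² = 1 for all s ∈ I. Then (p−1)² ≤ q < p² (in particular q ≥ 0 and p > √q), I ⊆ J_{p,q} := (−√(p−√q), √(p−√q)), and there exist θ ∈ ℝ and ε ∈ {−1, +1} such that for all s ∈ I, writing h := h_{p,q}(s) := √(p − s² + √((p − s²)² − q)): √2·α₁(s) = (h + (1−p)/h)·cos θ − ε·(√(q−(1−p)²)/h)·sin θ and √2·α₂(s) = (h + (1−p)/h)·sin θ + ε·(√(q−(1−p)²)/h)·cos θ. -/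
/-!
Differentiating `s² + α₁² + α₂² = 1` twice and eliminating `α''` with the ODE gives, for `s ≠ 0`,
`((s² - p)² - q) (α₁'² + α₂'²) = s² (2p - 1 - s²)`, while at `s = 0` the ODE forces `α' = 0`.
With Lagrange's identity for `α, α'` this makes the Wronskian `W = α₁ α₂' - α₂ α₁'` satisfy
`W² ((p - s²)² - q) = (q - (1 - p)²) s²`. Hence `q ≥ (1 - p)²`, and
`W √((p - s²)² - q) = ε √(q - (1 - p)²) s` with one sign `ε` on all of `I`: the quotient by `s`
is continuous also across `s = 0`, where it is a difference quotient.
The curve `(h + (1 - p)/h, ε √(q - (1 - p)²)/h)` has the same norm and the same Wronskian as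
`√2 α`, and plane curves with equal norms and equal Wronskians differ by a fixed rotation:
in complex notation `conj a * a' = conj b * b'` forces `(a / b)' = 0`.
-/

open Real Set Filter ComplexConjugate

lemma wronskian_sq_mul_eq_of_ode {p q s x₁ x₂ y₁ y₂ z₁ z₂ : ℝ} (hq : q ≠ p ^ 2)
    (hu : s ^ 2 + x₁ ^ 2 + x₂ ^ 2 = 1)
    (h₁ : s + x₁ * y₁ + x₂ * y₂ = 0)
    (h₂ : 1 + (y₁ ^ 2 + x₁ * z₁) + (y₂ ^ 2 + x₂ * z₂) = 0)
    (o₁ : s * ((s ^ 2 - p) ^ 2 - q) * z₁ + (s ^ 4 - p ^ 2 + q) * y₁ - s ^ 3 * x₁ = 0)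
    (o₂ : s * ((s ^ 2 - p) ^ 2 - q) * z₂ + (s ^ 4 - p ^ 2 + q) * y₂ - s ^ 3 * x₂ = 0) :
    (x₁ * y₂ - x₂ * y₁) ^ 2 * ((p - s ^ 2) ^ 2 - q) = (q - (1 - p) ^ 2) * s ^ 2 := by
  rcases eq_or_ne s 0 with rfl | hs
  · have hq' : q - p ^ 2 ≠ 0 := sub_ne_zero.2 hq
    obtain rfl : y₁ = 0 := (mul_eq_zero.1 (by linear_combination o₁)).resolve_left hq'
    obtain rfl : y₂ = 0 := (mul_eq_zero.1 (by linear_combination o₂)).resolve_left hq'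
    ring
  · have energy : ((s ^ 2 - p) ^ 2 - q) * (y₁ ^ 2 + y₂ ^ 2) = s ^ 2 * (2 * p - 1 - s ^ 2) :=
      mul_left_cancel₀ hs <| by
        linear_combination s * ((s ^ 2 - p) ^ 2 - q) * h₂ - x₁ * o₁ - x₂ * o₂ - s ^ 3 * hu
          + (s ^ 4 - p ^ 2 + q) * h₁
    have lagrange : (x₁ * y₂ - x₂ * y₁) ^ 2 = (y₁ ^ 2 + y₂ ^ 2) * (1 - s ^ 2) - s ^ 2 := by
      linear_combination (y₁ ^ 2 + y₂ ^ 2) * hu + (s - (x₁ * y₁ + x₂ * y₂)) * h₁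
    linear_combination ((p - s ^ 2) ^ 2 - q) * lagrange + (1 - s ^ 2) * energy

lemma wronskian_sq_mul_eq {I : Set ℝ} (hIo : IsOpen I) {p q : ℝ} (hq : q ≠ p ^ 2)
    {α₁ α₂ : ℝ → ℝ}
    (hd1 : ∀ s ∈ I, DifferentiableAt ℝ α₁ s) (hd1' : ∀ s ∈ I, DifferentiableAt ℝ (deriv α₁) s)
    (hd2 : ∀ s ∈ I, DifferentiableAt ℝ α₂ s) (hd2' : ∀ s ∈ I, DifferentiableAt ℝ (deriv α₂) s)
    (hode1 : ∀ s ∈ I, s * ((s ^ 2 - p) ^ 2 - q) * deriv (deriv α₁) s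
        + (s ^ 4 - p ^ 2 + q) * deriv α₁ s - s ^ 3 * α₁ s = 0)
    (hode2 : ∀ s ∈ I, s * ((s ^ 2 - p) ^ 2 - q) * deriv (deriv α₂) s
        + (s ^ 4 - p ^ 2 + q) * deriv α₂ s - s ^ 3 * α₂ s = 0)
    (hunit : ∀ s ∈ I, s ^ 2 + α₁ s ^ 2 + α₂ s ^ 2 = 1) {s : ℝ} (hs : s ∈ I) :
    (α₁ s * deriv α₂ s - α₂ s * deriv α₁ s) ^ 2 * ((p - s ^ 2) ^ 2 - q)
      = (q - (1 - p) ^ 2) * s ^ 2 := by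
  have first : ∀ s ∈ I, s + α₁ s * deriv α₁ s + α₂ s * deriv α₂ s = 0 := by
    intro s hs
    have h := (((hasDerivAt_pow 2 s).add ((hd1 s hs).hasDerivAt.pow 2)).add
      ((hd2 s hs).hasDerivAt.pow 2)).unique ((hasDerivAt_const s (1 : ℝ)).congr_of_eventuallyEq
        (eventuallyEq_of_mem (hIo.mem_nhds hs) hunit))
    linear_combination h / 2
  have second := (((hasDerivAt_id s).add ((hd1 s hs).hasDerivAt.mul (hd1' s hs).hasDerivAt)).add
    ((hd2 s hs).hasDerivAt.mul (hd2' s hs).hasDerivAt)).unique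
      ((hasDerivAt_const s (0 : ℝ)).congr_of_eventuallyEq
        (eventuallyEq_of_mem (hIo.mem_nhds hs) first))
  exact wronskian_sq_mul_eq_of_ode hq (hunit s hs) (first s hs) (by linear_combination second)
    (hode1 s hs) (hode2 s hs)

lemma exists_continuousOn_eq_mul_id {I : Set ℝ} (hIo : IsOpen I) {V : ℝ → ℝ}
    (hV : ∀ s ∈ I, DifferentiableAt ℝ V s) (hV0 : 0 ∈ I → V 0 = 0) :
    ∃ g : ℝ → ℝ, ContinuousOn g I ∧ ∀ s ∈ I, V s = g s * s := by
  have hVc : ContinuousOn V I := fun s hs => (hV s hs).continuousAt.continuousWithinAt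
  by_cases h0 : (0 : ℝ) ∈ I
  · refine ⟨dslope V 0, (continuousOn_dslope (hIo.mem_nhds h0)).2 ⟨hVc, hV 0 h0⟩,
      fun s _ => ?_⟩
    have := sub_smul_dslope V 0 s
    rw [hV0 h0, smul_eq_mul] at this
    linear_combination -this
  · refine ⟨fun s => V s / s, hVc.div continuousOn_id fun s hs h => h0 (h ▸ hs),
      fun s hs => ?_⟩
    have : s ≠ 0 := fun h => h0 (h ▸ hs)
    field_simp

lemma exists_sign_of_sq_eq_sq_mul {I : Set ℝ} (hIo : IsOpen I) (hIc : IsPreconnected I)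
    {V : ℝ → ℝ} (hV : ∀ s ∈ I, DifferentiableAt ℝ V s) {c : ℝ}
    (hsq : ∀ s ∈ I, V s ^ 2 = (c * s) ^ 2) :
    ∃ ε : ℝ, (ε = 1 ∨ ε = -1) ∧ ∀ s ∈ I, V s = ε * (c * s) := by
  rcases eq_or_ne c 0 with rfl | hc
  · exact ⟨1, Or.inl rfl, fun s hs => by simpa using hsq s hs⟩
  obtain ⟨g, hg, hVg⟩ :=
    exists_continuousOn_eq_mul_id hIo hV fun h0 => by simpa using hsq 0 h0
  have hgsq : EqOn (g ^ 2) (fun _ => c ^ 2) I := by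
    refine EqOn.of_subset_closure (s := I ∩ {0}ᶜ) (fun s ⟨hs, hs0⟩ => ?_) (hg.pow 2)
      continuousOn_const inter_subset_left
      ((dense_compl_singleton 0).open_subset_closure_inter hIo)
    have := hsq s hs
    rw [hVg s hs] at this
    exact mul_right_cancel₀ (pow_ne_zero 2 hs0) (by simpa [mul_pow] using this)
  rcases hIc.eq_or_eq_neg_of_sq_eq hg continuousOn_const hgsq fun _ => hc with h | h
  · exact ⟨1, Or.inl rfl, fun s hs => by rw [hVg s hs, h hs]; ring⟩
  · exact ⟨-1, Or.inr rfl, fun s hs => by rw [hVg s hs, h hs]; simp⟩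

lemma exists_eq_mul_of_conj_mul_deriv_eq {I : Set ℝ} (hIo : IsOpen I) (hIc : IsPreconnected I)
    {A B A' B' : ℝ → ℂ} (hA : ∀ s ∈ I, HasDerivAt A (A' s) s)
    (hB : ∀ s ∈ I, HasDerivAt B (B' s) s) (hB0 : ∀ s ∈ I, B s ≠ 0)
    (hnorm : ∀ s ∈ I, ‖A s‖ = ‖B s‖)
    (hconj : ∀ s ∈ I, conj (A s) * A' s = conj (B s) * B' s) :
    ∃ u : ℂ, ‖u‖ = 1 ∧ ∀ s ∈ I, A s = u * B s := by
  have hquot : ∀ s ∈ I, HasDerivAt (fun s => A s / B s) 0 s := by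
    intro s hs
    have hsq : A s * conj (A s) = B s * conj (B s) := by
      rw [Complex.mul_conj', Complex.mul_conj', hnorm s hs]
    have hwr : (A' s * B s - A s * B' s) * conj (B s) = 0 := by
      linear_combination -(A' s) * hsq + A s * hconj s hs
    have h := (hA s hs).div (hB s hs) (hB0 s hs)
    rwa [(mul_eq_zero.1 hwr).resolve_right ((map_ne_zero _).2 (hB0 s hs)), zero_div] at h
  obtain ⟨u, hu⟩ := hIo.exists_is_const_of_deriv_eq_zero hIc
    (fun s hs => (hquot s hs).differentiableAt.differentiableWithinAt)
    fun s hs => (hquot s hs).deriv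
  have hAuB : ∀ s ∈ I, A s = u * B s := fun s hs => by
    rw [← hu s hs, div_mul_cancel₀ _ (hB0 s hs)]
  rcases I.eq_empty_or_nonempty with rfl | ⟨s, hs⟩
  · exact ⟨1, norm_one, fun _ h => h.elim⟩
  refine ⟨u, ?_, hAuB⟩
  have := hnorm s hs
  rw [hAuB s hs, norm_mul] at this
  exact mul_right_cancel₀ (norm_ne_zero_iff.2 (hB0 s hs)) (by rw [this, one_mul])

lemma conj_add_mul_I_mul_add_mul_I (x y x' y' : ℝ) :
    conj ((x : ℂ) + y * Complex.I) * (x' + y' * Complex.I)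
      = ((x * x' + y * y' : ℝ) : ℂ) + ((x * y' - y * x' : ℝ) : ℂ) * Complex.I := by
  rw [map_add, map_mul, Complex.conj_ofReal, Complex.conj_ofReal, Complex.conj_I]
  push_cast
  linear_combination (-(y * y')) * Complex.I_sq

lemma exists_rotation_of_wronskian_eq {I : Set ℝ} (hIo : IsOpen I) (hIc : IsPreconnected I)
    {a₁ a₂ b₁ b₂ a₁' a₂' b₁' b₂' : ℝ → ℝ}
    (ha₁ : ∀ s ∈ I, HasDerivAt a₁ (a₁' s) s) (ha₂ : ∀ s ∈ I, HasDerivAt a₂ (a₂' s) s)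
    (hb₁ : ∀ s ∈ I, HasDerivAt b₁ (b₁' s) s) (hb₂ : ∀ s ∈ I, HasDerivAt b₂ (b₂' s) s)
    (hb : ∀ s ∈ I, 0 < b₁ s ^ 2 + b₂ s ^ 2)
    (hnorm : ∀ s ∈ I, a₁ s ^ 2 + a₂ s ^ 2 = b₁ s ^ 2 + b₂ s ^ 2)
    (hwr : ∀ s ∈ I, a₁ s * a₂' s - a₂ s * a₁' s = b₁ s * b₂' s - b₂ s * b₁' s) :
    ∃ θ : ℝ, ∀ s ∈ I,
      a₁ s = b₁ s * cos θ - b₂ s * sin θ ∧ a₂ s = b₁ s * sin θ + b₂ s * cos θ := by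
  have hdot : ∀ s ∈ I, a₁ s * a₁' s + a₂ s * a₂' s = b₁ s * b₁' s + b₂ s * b₂' s := by
    intro s hs
    have h := (((ha₁ s hs).pow 2).add ((ha₂ s hs).pow 2)).unique
      ((((hb₁ s hs).pow 2).add ((hb₂ s hs).pow 2)).congr_of_eventuallyEq
        (eventuallyEq_of_mem (hIo.mem_nhds hs) hnorm))
    linear_combination h / 2
  have hcurve : ∀ {x₁ x₂ x₁' x₂' : ℝ → ℝ}, (∀ s ∈ I, HasDerivAt x₁ (x₁' s) s) →
      (∀ s ∈ I, HasDerivAt x₂ (x₂' s) s) → ∀ s ∈ I,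
      HasDerivAt (fun s => (x₁ s : ℂ) + x₂ s * Complex.I) (x₁' s + x₂' s * Complex.I) s :=
    fun h₁ h₂ s hs => (h₁ s hs).ofReal_comp.add ((h₂ s hs).ofReal_comp.mul_const _)
  obtain ⟨u, hu, hAB⟩ := exists_eq_mul_of_conj_mul_deriv_eq hIo hIc (hcurve ha₁ ha₂)
    (hcurve hb₁ hb₂)
    (fun s hs => by
      rw [← norm_ne_zero_iff, Complex.norm_add_mul_I]
      exact (sqrt_pos.2 (hb s hs)).ne')
    (fun s hs => by simp only [Complex.norm_add_mul_I, hnorm s hs])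
    (fun s hs => by
      rw [conj_add_mul_I_mul_add_mul_I, conj_add_mul_I_mul_add_mul_I, hdot s hs, hwr s hs])
  have hu0 : u ≠ 0 := by rintro rfl; simp at hu
  refine ⟨Complex.arg u, fun s hs => ?_⟩
  rw [Complex.cos_arg hu0, Complex.sin_arg, hu, div_one, div_one]
  have h₁ : a₁ s = u.re * b₁ s - u.im * b₂ s := by simpa using congrArg Complex.re (hAB s hs)
  have h₂ : a₂ s = u.re * b₂ s + u.im * b₁ s := by simpa using congrArg Complex.im (hAB s hs)
  constructor <;> linarith

noncomputable def profileH (p q s : ℝ) : ℝ := √(p - s ^ 2 + √((p - s ^ 2) ^ 2 - q))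

noncomputable def profileCurve₁ (p q s : ℝ) : ℝ := profileH p q s + (1 - p) / profileH p q s

noncomputable def profileCurve₂ (p q ε s : ℝ) : ℝ :=
  ε * (√(q - (1 - p) ^ 2) / profileH p q s)

section Profile

variable {p q s : ℝ}

lemma profileH_pos (ht : 0 < p - s ^ 2) : 0 < profileH p q s :=
  sqrt_pos.2 (add_pos_of_pos_of_nonneg ht (sqrt_nonneg _))

lemma sq_profileH (ht : 0 < p - s ^ 2) :
    profileH p q s ^ 2 = p - s ^ 2 + √((p - s ^ 2) ^ 2 - q) :=
  sq_sqrt (add_pos_of_pos_of_nonneg ht (sqrt_nonneg _)).le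

lemma hasDerivAt_profileH (ht : 0 < p - s ^ 2) (hD : 0 < (p - s ^ 2) ^ 2 - q) :
    HasDerivAt (profileH p q) (-(s * profileH p q s) / √((p - s ^ 2) ^ 2 - q)) s := by
  have hin : HasDerivAt (fun x : ℝ => p - x ^ 2) (-(2 * s)) s := by
    simpa using (hasDerivAt_pow 2 s).const_sub p
  have hroot : HasDerivAt (fun x : ℝ => √((p - x ^ 2) ^ 2 - q))
      (2 * (p - s ^ 2) * -(2 * s) / (2 * √((p - s ^ 2) ^ 2 - q))) s := by
    simpa using ((hin.pow 2).sub_const q).sqrt hD.ne'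
  have h := (hin.fun_add hroot).sqrt (add_pos_of_pos_of_nonneg ht (sqrt_nonneg _)).ne'
  refine h.congr_deriv ?_
  have hh := (profileH_pos (q := q) ht).ne'
  have hD' := (sqrt_pos.2 hD).ne'
  have hH2 := sq_profileH (q := q) ht
  unfold profileH at hh hH2 ⊢
  field_simp
  linear_combination s * hH2

lemma hasDerivAt_profileCurve₁ (ht : 0 < p - s ^ 2) (hD : 0 < (p - s ^ 2) ^ 2 - q) :
    HasDerivAt (profileCurve₁ p q)
      (-(s * (profileH p q s ^ 2 - (1 - p))) / (profileH p q s * √((p - s ^ 2) ^ 2 - q))) s := by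
  have hH := hasDerivAt_profileH ht hD
  refine (hH.add ((hasDerivAt_const s (1 - p)).div hH (profileH_pos ht).ne')).congr_deriv ?_
  have hh := (profileH_pos (q := q) ht).ne'
  have hD' := (sqrt_pos.2 hD).ne'
  field_simp
  ring

lemma hasDerivAt_profileCurve₂ (ε : ℝ) (ht : 0 < p - s ^ 2) (hD : 0 < (p - s ^ 2) ^ 2 - q) :
    HasDerivAt (profileCurve₂ p q ε)
      (ε * √(q - (1 - p) ^ 2) * s / (profileH p q s * √((p - s ^ 2) ^ 2 - q))) s := by
  have hH := hasDerivAt_profileH ht hD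
  refine (((hasDerivAt_const s _).div hH (profileH_pos ht).ne').const_mul ε).congr_deriv ?_
  have hh := (profileH_pos (q := q) ht).ne'
  have hD' := (sqrt_pos.2 hD).ne'
  field_simp
  ring

lemma profileCurve_sq_add_sq {ε : ℝ} (hε : ε ^ 2 = 1) (ht : 0 < p - s ^ 2)
    (hD : 0 ≤ (p - s ^ 2) ^ 2 - q) (hc : 0 ≤ q - (1 - p) ^ 2) :
    profileCurve₁ p q s ^ 2 + profileCurve₂ p q ε s ^ 2 = 2 * (1 - s ^ 2) := by
  have hh := (profileH_pos (q := q) ht).ne'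
  unfold profileCurve₁ profileCurve₂
  field_simp
  rw [hε, sq_sqrt hc]
  linear_combination (profileH p q s ^ 2 - (p - s ^ 2) + √((p - s ^ 2) ^ 2 - q)) * sq_profileH ht
    + sq_sqrt hD

lemma profileCurve_wronskian (ε : ℝ) (ht : 0 < p - s ^ 2) (hD : 0 < (p - s ^ 2) ^ 2 - q) :
    profileCurve₁ p q s * (ε * √(q - (1 - p) ^ 2) * s / (profileH p q s * √((p - s ^ 2) ^ 2 - q)))
      - profileCurve₂ p q ε s * (-(s * (profileH p q s ^ 2 - (1 - p)))
        / (profileH p q s * √((p - s ^ 2) ^ 2 - q)))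
      = 2 * (ε * √(q - (1 - p) ^ 2) * s) / √((p - s ^ 2) ^ 2 - q) := by
  have hh := (profileH_pos (q := q) ht).ne'
  have hD' := (sqrt_pos.2 hD).ne'
  unfold profileCurve₁ profileCurve₂
  field_simp
  ring

lemma exists_rotation_profileCurve {I : Set ℝ} (hIo : IsOpen I) (hIc : IsPreconnected I)
    {p q ε : ℝ} (hε : ε ^ 2 = 1) (hc : 0 ≤ q - (1 - p) ^ 2) (ht : ∀ s ∈ I, 0 < p - s ^ 2)
    (hD : ∀ s ∈ I, 0 < (p - s ^ 2) ^ 2 - q) (hs1 : ∀ s ∈ I, s ^ 2 < 1)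
    {a₁ a₂ a₁' a₂' : ℝ → ℝ}
    (ha₁ : ∀ s ∈ I, HasDerivAt a₁ (a₁' s) s) (ha₂ : ∀ s ∈ I, HasDerivAt a₂ (a₂' s) s)
    (hnorm : ∀ s ∈ I, a₁ s ^ 2 + a₂ s ^ 2 = 2 * (1 - s ^ 2))
    (hwr : ∀ s ∈ I, (a₁ s * a₂' s - a₂ s * a₁' s) * √((p - s ^ 2) ^ 2 - q)
      = 2 * (ε * √(q - (1 - p) ^ 2) * s)) :
    ∃ θ : ℝ, ∀ s ∈ I,
      a₁ s = profileCurve₁ p q s * cos θ - profileCurve₂ p q ε s * sin θ ∧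
      a₂ s = profileCurve₁ p q s * sin θ + profileCurve₂ p q ε s * cos θ :=
  exists_rotation_of_wronskian_eq hIo hIc ha₁ ha₂
    (fun s hs => hasDerivAt_profileCurve₁ (ht s hs) (hD s hs))
    (fun s hs => hasDerivAt_profileCurve₂ ε (ht s hs) (hD s hs))
    (fun s hs => by
      rw [profileCurve_sq_add_sq hε (ht s hs) (hD s hs).le hc]
      linarith [hs1 s hs])
    (fun s hs => by rw [hnorm s hs, profileCurve_sq_add_sq hε (ht s hs) (hD s hs).le hc])
    (fun s hs => by
      rw [profileCurve_wronskian ε (ht s hs) (hD s hs), eq_div_iff (sqrt_pos.2 (hD s hs)).ne']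
      exact hwr s hs)

end Profile

lemma sub_sqrt_le_one {p q : ℝ} (hq : (p - 1) ^ 2 ≤ q) : p - √q ≤ 1 := by
  linarith [le_abs_self (p - 1), abs_le_sqrt hq]

lemma sq_lt_sub_sqrt {p q s : ℝ} (hq : (p - 1) ^ 2 ≤ q) (hs : s ^ 2 ≤ 1)
    (hD : 0 < (p - s ^ 2) ^ 2 - q) : s ^ 2 < p - √q := by
  by_contra! h
  have hlow : -√q ≤ p - s ^ 2 := by linarith [neg_abs_le (p - 1), abs_le_sqrt hq]
  have := sq_le_sq' hlow (by linarith)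
  rw [sq_sqrt ((sq_nonneg _).trans hq)] at this
  linarith

theorem stmt_7_general (p q : ℝ) (hpq : q < p ^ 2)
    (I : Set ℝ) (hIo : IsOpen I) (hIc : I.OrdConnected) (hIne : I.Nonempty)
    (hpos : ∀ s ∈ I, 0 < (s ^ 2 - p) ^ 2 - q)
    (α₁ α₂ : ℝ → ℝ)
    (hd1 : ∀ s ∈ I, DifferentiableAt ℝ α₁ s)
    (hd1' : ∀ s ∈ I, DifferentiableAt ℝ (deriv α₁) s)
    (hd2 : ∀ s ∈ I, DifferentiableAt ℝ α₂ s)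
    (hd2' : ∀ s ∈ I, DifferentiableAt ℝ (deriv α₂) s)
    (hode1 : ∀ s ∈ I, s * ((s ^ 2 - p) ^ 2 - q) * deriv (deriv α₁) s
        + (s ^ 4 - p ^ 2 + q) * deriv α₁ s - s ^ 3 * α₁ s = 0)
    (hode2 : ∀ s ∈ I, s * ((s ^ 2 - p) ^ 2 - q) * deriv (deriv α₂) s
        + (s ^ 4 - p ^ 2 + q) * deriv α₂ s - s ^ 3 * α₂ s = 0)
    (hunit : ∀ s ∈ I, s ^ 2 + α₁ s ^ 2 + α₂ s ^ 2 = 1) :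
    (p - 1) ^ 2 ≤ q ∧
    I ⊆ Set.Ioo (-Real.sqrt (p - Real.sqrt q)) (Real.sqrt (p - Real.sqrt q)) ∧
    ∃ θ ε : ℝ, (ε = 1 ∨ ε = -1) ∧ ∀ s ∈ I,
      (Real.sqrt 2 * α₁ s =
          (Real.sqrt (p - s ^ 2 + Real.sqrt ((p - s ^ 2) ^ 2 - q))
              + (1 - p) / Real.sqrt (p - s ^ 2 + Real.sqrt ((p - s ^ 2) ^ 2 - q)))
            * Real.cos θ
          - ε * (Real.sqrt (q - (1 - p) ^ 2)
              / Real.sqrt (p - s ^ 2 + Real.sqrt ((p - s ^ 2) ^ 2 - q))) * Real.sin θ) ∧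
      (Real.sqrt 2 * α₂ s =
          (Real.sqrt (p - s ^ 2 + Real.sqrt ((p - s ^ 2) ^ 2 - q))
              + (1 - p) / Real.sqrt (p - s ^ 2 + Real.sqrt ((p - s ^ 2) ^ 2 - q)))
            * Real.sin θ
          + ε * (Real.sqrt (q - (1 - p) ^ 2)
              / Real.sqrt (p - s ^ 2 + Real.sqrt ((p - s ^ 2) ^ 2 - q))) * Real.cos θ) := by
  have hD : ∀ s ∈ I, 0 < (p - s ^ 2) ^ 2 - q := fun s hs => by
    convert hpos s hs using 2; ring
  have hW := fun s (hs : s ∈ I) =>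
    wronskian_sq_mul_eq hIo hpq.ne hd1 hd1' hd2 hd2' hode1 hode2 hunit hs
  have hc : 0 ≤ q - (1 - p) ^ 2 := by
    obtain ⟨s, hs, hs0⟩ :=
      (infinite_of_mem_nhds _ (hIo.mem_nhds hIne.some_mem)).nontrivial.exists_ne 0
    exact nonneg_of_mul_nonneg_left (hW s hs ▸ mul_nonneg (sq_nonneg _) (hD s hs).le)
      (sq_pos_of_ne_zero hs0)
  have hq : (p - 1) ^ 2 ≤ q := by linarith
  have hJ : ∀ s ∈ I, s ^ 2 < p - √q := fun s hs =>
    sq_lt_sub_sqrt hq (by nlinarith [hunit s hs]) (hD s hs)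
  have ht : ∀ s ∈ I, 0 < p - s ^ 2 := fun s hs => by linarith [sqrt_nonneg q, hJ s hs]
  obtain ⟨ε, hε, hV⟩ := exists_sign_of_sq_eq_sq_mul hIo hIc.isPreconnected
    (V := fun s => (α₁ s * deriv α₂ s - α₂ s * deriv α₁ s) * √((p - s ^ 2) ^ 2 - q))
    (c := √(q - (1 - p) ^ 2))
    (fun s hs => (((hd1 s hs).mul (hd2' s hs)).sub ((hd2 s hs).mul (hd1' s hs))).mul
      (by fun_prop (disch := exact (hD s hs).ne')))
    fun s hs => by simp only [mul_pow, sq_sqrt (hD s hs).le, sq_sqrt hc, hW s hs]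
  have hε2 : ε ^ 2 = 1 := by rcases hε with rfl | rfl <;> norm_num
  obtain ⟨θ, hθ⟩ := exists_rotation_profileCurve hIo hIc.isPreconnected hε2 hc ht hD
    (fun s hs => (hJ s hs).trans_le (sub_sqrt_le_one hq))
    (fun s hs => (hd1 s hs).hasDerivAt.const_mul (√2))
    (fun s hs => (hd2 s hs).hasDerivAt.const_mul (√2))
    (fun s hs => by
      linear_combination (α₁ s ^ 2 + α₂ s ^ 2) * sq_sqrt zero_le_two + 2 * hunit s hs)
    (fun s hs => by
      linear_combination 2 * hV s hs + (α₁ s * deriv α₂ s - α₂ s * deriv α₁ s)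
        * √((p - s ^ 2) ^ 2 - q) * sq_sqrt zero_le_two)
  exact ⟨hq, fun s hs => sq_lt.1 (hJ s hs), θ, ε, hε, hθ⟩

/-- (Lemma on the ODE of the profile curve.)  If `α₁, α₂` are twice
differentiable, linearly independent solutions of
`s((s²−p)²−q) α'' + (s⁴−p²+q) α' − s³ α = 0` on a nonempty open interval `I` on which
`(s²−p)² − q > 0`, with `p² > q` and `s² + α₁(s)² + α₂(s)² = 1` on `I`, then
`(p−1)² ≤ q < p²`, `I ⊆ J_{p,q}`, and there are `θ ∈ ℝ` and `ε ∈ {−1,1}` so that,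
writing `h = h_{p,q}(s)`,
`√2 α₁ = (h + (1−p)/h) cos θ − ε (√(q−(1−p)²)/h) sin θ` and
`√2 α₂ = (h + (1−p)/h) sin θ + ε (√(q−(1−p)²)/h) cos θ` on `I`. -/
theorem stmt_7 (p q : ℝ) (hpq : q < p ^ 2)
    (I : Set ℝ) (hIo : IsOpen I) (hIc : I.OrdConnected) (hIne : I.Nonempty)
    (hpos : ∀ s ∈ I, 0 < (s ^ 2 - p) ^ 2 - q)
    (α₁ α₂ : ℝ → ℝ)
    (hd1 : ∀ s ∈ I, DifferentiableAt ℝ α₁ s)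
    (hd1' : ∀ s ∈ I, DifferentiableAt ℝ (deriv α₁) s)
    (hd2 : ∀ s ∈ I, DifferentiableAt ℝ α₂ s)
    (hd2' : ∀ s ∈ I, DifferentiableAt ℝ (deriv α₂) s)
    (hode1 : ∀ s ∈ I, s * ((s ^ 2 - p) ^ 2 - q) * deriv (deriv α₁) s
        + (s ^ 4 - p ^ 2 + q) * deriv α₁ s - s ^ 3 * α₁ s = 0)
    (hode2 : ∀ s ∈ I, s * ((s ^ 2 - p) ^ 2 - q) * deriv (deriv α₂) s
        + (s ^ 4 - p ^ 2 + q) * deriv α₂ s - s ^ 3 * α₂ s = 0)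
    (hindep : ∀ c₁ c₂ : ℝ, (∀ s ∈ I, c₁ * α₁ s + c₂ * α₂ s = 0) → c₁ = 0 ∧ c₂ = 0)
    (hunit : ∀ s ∈ I, s ^ 2 + α₁ s ^ 2 + α₂ s ^ 2 = 1) :
    (p - 1) ^ 2 ≤ q ∧
    I ⊆ Set.Ioo (-Real.sqrt (p - Real.sqrt q)) (Real.sqrt (p - Real.sqrt q)) ∧
    ∃ θ ε : ℝ, (ε = 1 ∨ ε = -1) ∧ ∀ s ∈ I,
      (Real.sqrt 2 * α₁ s =
          (Real.sqrt (p - s ^ 2 + Real.sqrt ((p - s ^ 2) ^ 2 - q))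
              + (1 - p) / Real.sqrt (p - s ^ 2 + Real.sqrt ((p - s ^ 2) ^ 2 - q)))
            * Real.cos θ
          - ε * (Real.sqrt (q - (1 - p) ^ 2)
              / Real.sqrt (p - s ^ 2 + Real.sqrt ((p - s ^ 2) ^ 2 - q))) * Real.sin θ) ∧
      (Real.sqrt 2 * α₂ s =
          (Real.sqrt (p - s ^ 2 + Real.sqrt ((p - s ^ 2) ^ 2 - q))
              + (1 - p) / Real.sqrt (p - s ^ 2 + Real.sqrt ((p - s ^ 2) ^ 2 - q)))
            * Real.sin θ
          + ε * (Real.sqrt (q - (1 - p) ^ 2)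
              / Real.sqrt (p - s ^ 2 + Real.sqrt ((p - s ^ 2) ^ 2 - q))) * Real.cos θ) :=
  stmt_7_general p q hpq I hIo hIc hIne hpos α₁ α₂ hd1 hd1' hd2 hd2' hode1 hode2 hunit
end

section
/- Let (p,q) ∈ ℐ := {(p,q) ∈ ℝ² : (p−1)² ≤ q < p²}, let s ∈ J_{p,q} := (−√(p−√q), √(p−√q)), and set h := h_{p,q}(s) := √(p − s² + √((p − s²)² − q)). Then s² + (1/2)·(h + (1−p)/h)² + (q − (p−1)²)/(2h²) = 1. Consequently, for every unit vector x ∈ ℝ^m the point (s·x, (√2/2)·(h + (1−p)/h), √(q−(p−1)²)/(√2·h)) lies on the unit sphere 𝕊^{m+1} ⊂ ℝ^{m+2}. -/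
/-! With `A = p − s²` and `B = √(A² − q)` we have `h² = A + B` and `q = A² − B² = (A − B) h²`,
so `h²/2 + q/(2h²) = A`. Expanding the square, the left-hand side of the identity is
`s² + (1 − p) + h²/2 + q/(2h²) = 1`, and it is exactly the squared norm of the given point. -/

open Real

lemma sq_lt_of_mem_Ioo_neg_sqrt {s a : ℝ} (hs : s ∈ Set.Ioo (-√a) (√a)) : s ^ 2 < a := by
  simpa only [sq_abs] using (Real.lt_sqrt (abs_nonneg s)).1 (abs_lt.2 hs)

lemma half_sq_add_div_two_sq_of_sq_eq {A q h : ℝ} (hA : 0 < A) (hq : q ≤ A ^ 2)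
    (hh : h ^ 2 = A + √(A ^ 2 - q)) : h ^ 2 / 2 + q / (2 * h ^ 2) = A := by
  have hB : √(A ^ 2 - q) ^ 2 = A ^ 2 - q := Real.sq_sqrt (by linarith)
  have hh0 : h ^ 2 ≠ 0 := by rw [hh]; positivity
  have hq_eq : q = (A - √(A ^ 2 - q)) * h ^ 2 := by rw [hh]; linear_combination hB
  rw [hq_eq, mul_div_mul_right _ _ hh0]
  linear_combination hh / 2

lemma sq_add_half_sq_add_div_eq_one {p q s h : ℝ} (hA : 0 < p - s ^ 2) (hq : q ≤ (p - s ^ 2) ^ 2)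
    (hh : h = √(p - s ^ 2 + √((p - s ^ 2) ^ 2 - q))) :
    s ^ 2 + (1 / 2) * (h + (1 - p) / h) ^ 2 + (q - (p - 1) ^ 2) / (2 * h ^ 2) = 1 := by
  have hh2 : h ^ 2 = p - s ^ 2 + √((p - s ^ 2) ^ 2 - q) := by
    rw [hh]; exact Real.sq_sqrt (by positivity)
  have hh0 : h ≠ 0 := by rw [hh]; positivity
  calc s ^ 2 + (1 / 2) * (h + (1 - p) / h) ^ 2 + (q - (p - 1) ^ 2) / (2 * h ^ 2)
      = s ^ 2 + (1 - p) + (h ^ 2 / 2 + q / (2 * h ^ 2)) := by field_simp; ring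
    _ = 1 := by rw [half_sq_add_div_two_sq_of_sq_eq hA hq hh2]; ring

lemma EuclideanSpace.norm_sq_toLp_snoc {n : ℕ} (v : Fin n → ℝ) (a : ℝ) :
    ‖WithLp.toLp 2 (Fin.snoc v a : Fin (n + 1) → ℝ)‖ ^ 2 = ‖WithLp.toLp 2 v‖ ^ 2 + a ^ 2 := by
  simp only [EuclideanSpace.norm_sq_eq, Fin.sum_univ_castSucc, Fin.snoc_castSucc, Fin.snoc_last,
    Real.norm_eq_abs, sq_abs]

lemma toLp_snoc_snoc_mem_sphere {m : ℕ} {x : EuclideanSpace ℝ (Fin m)} (hx : ‖x‖ = 1)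
    {s a b : ℝ} (hsab : s ^ 2 + a ^ 2 + b ^ 2 = 1) :
    WithLp.toLp 2 (Fin.snoc (Fin.snoc (fun i : Fin m => s * x i) a) b : Fin (m + 2) → ℝ) ∈
      Metric.sphere (0 : EuclideanSpace ℝ (Fin (m + 2))) 1 := by
  have hsx : WithLp.toLp 2 (fun i : Fin m => s * x i) = s • x := rfl
  rw [mem_sphere_zero_iff_norm, ← pow_eq_one_iff_of_nonneg (norm_nonneg _) two_ne_zero,
    EuclideanSpace.norm_sq_toLp_snoc, EuclideanSpace.norm_sq_toLp_snoc, hsx, norm_smul, hx,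
    mul_one, Real.norm_eq_abs, sq_abs, hsab]

theorem stmt_8_general (p q : ℝ) (hpq1 : (p - 1) ^ 2 ≤ q) (s : ℝ)
    (hs : s ∈ Set.Ioo (-Real.sqrt (p - Real.sqrt q)) (Real.sqrt (p - Real.sqrt q)))
    (h : ℝ) (hdef : h = Real.sqrt (p - s ^ 2 + Real.sqrt ((p - s ^ 2) ^ 2 - q))) :
    s ^ 2 + (1 / 2) * (h + (1 - p) / h) ^ 2 + (q - (p - 1) ^ 2) / (2 * h ^ 2) = 1 ∧
    ∀ (m : ℕ) (x : EuclideanSpace ℝ (Fin m)), ‖x‖ = 1 →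
      ((WithLp.equiv 2 (Fin (m + 2) → ℝ)).symm
          (Fin.snoc
            (Fin.snoc (fun i : Fin m => s * x i)
              (Real.sqrt 2 / 2 * (h + (1 - p) / h)))
            (Real.sqrt (q - (p - 1) ^ 2) / (Real.sqrt 2 * h))) :
        EuclideanSpace ℝ (Fin (m + 2))) ∈
      Metric.sphere (0 : EuclideanSpace ℝ (Fin (m + 2))) 1 := by
  have hsqrt_lt : √q < p - s ^ 2 := by linarith [sq_lt_of_mem_Ioo_neg_sqrt hs]
  have hA : 0 < p - s ^ 2 := (Real.sqrt_nonneg q).trans_lt hsqrt_lt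
  have key := sq_add_half_sq_add_div_eq_one hA ((Real.sqrt_lt' hA).1 hsqrt_lt).le hdef
  refine ⟨key, fun m x hx => toLp_snoc_snoc_mem_sphere hx ?_⟩
  rw [div_pow, mul_pow, mul_pow, div_pow, Real.sq_sqrt (sub_nonneg.2 hpq1),
    Real.sq_sqrt zero_le_two]
  linear_combination key

/-- For `(p,q) ∈ ℐ`, `s ∈ J_{p,q}` and `h = h_{p,q}(s)` one has
`s² + (1/2)(h + (1−p)/h)² + (q − (p−1)²)/(2h²) = 1`; consequently, for every unit vector
`x ∈ ℝ^m` the point `(s·x, (√2/2)(h+(1−p)/h), √(q−(p−1)²)/(√2 h))` lies on the unit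
sphere `𝕊^{m+1} ⊂ ℝ^{m+2}`. -/
theorem stmt_8 (p q : ℝ) (hpq1 : (p - 1) ^ 2 ≤ q) (hpq2 : q < p ^ 2) (s : ℝ)
    (hs : s ∈ Set.Ioo (-Real.sqrt (p - Real.sqrt q)) (Real.sqrt (p - Real.sqrt q)))
    (h : ℝ) (hdef : h = Real.sqrt (p - s ^ 2 + Real.sqrt ((p - s ^ 2) ^ 2 - q))) :
    s ^ 2 + (1 / 2) * (h + (1 - p) / h) ^ 2 + (q - (p - 1) ^ 2) / (2 * h ^ 2) = 1 ∧
    ∀ (m : ℕ) (x : EuclideanSpace ℝ (Fin m)), ‖x‖ = 1 →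
      ((WithLp.equiv 2 (Fin (m + 2) → ℝ)).symm
          (Fin.snoc
            (Fin.snoc (fun i : Fin m => s * x i)
              (Real.sqrt 2 / 2 * (h + (1 - p) / h)))
            (Real.sqrt (q - (p - 1) ^ 2) / (Real.sqrt 2 * h))) :
        EuclideanSpace ℝ (Fin (m + 2))) ∈
      Metric.sphere (0 : EuclideanSpace ℝ (Fin (m + 2))) 1 :=
  stmt_8_general p q hpq1 s hs h hdef
end

section
/- Let p, q ∈ ℝ with 0 ≤ q < p² and √q < p, and for s in the closed interval [−√(p−√q), √(p−√q)] set h := h_{p,q}(s) := √(p − s² + √((p − s²)² − q)). Then (s·h)² + (1/2)·(h² − p)² = (p² − q)/2. Moreover, if q > 0, then setting h̄ := √q / h one also has (s·h̄)² + (1/2)·(h̄² − p)² = (p² − q)/2. In other words, the curves γ(s) = (s·h_{p,q}(s), (√2/2)(h_{p,q}(s)² − p)) and γ̄(s) = (s·h̄_{p,q}(s), (√2/2)(h̄_{p,q}(s)² − p)) in ℝ² take values in the circle of radius √((p²−q)/2) centered at the origin. -/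
/-- For `0 ≤ q < p²`, `√q < p`, and `s` in the closed interval
`[−√(p−√q), √(p−√q)]`, with `h = h_{p,q}(s)` one has
`(s·h)² + (1/2)(h²−p)² = (p²−q)/2`, and if `q > 0` the same holds with
`h̄ = √q/h`; i.e. the curves `γ, γ̄` take values in the circle of radius
`√((p²−q)/2)` centered at the origin of `ℝ²`. -/
theorem stmt_9 (p q : ℝ) (hq0 : 0 ≤ q) (hq : q < p ^ 2) (hp : Real.sqrt q < p)
    (h : ℝ → ℝ)
    (hdef : ∀ s, h s = Real.sqrt (p - s ^ 2 + Real.sqrt ((p - s ^ 2) ^ 2 - q))) :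
    ∀ s ∈ Set.Icc (-Real.sqrt (p - Real.sqrt q)) (Real.sqrt (p - Real.sqrt q)),
      (s * h s) ^ 2 + (1 / 2) * ((h s) ^ 2 - p) ^ 2 = (p ^ 2 - q) / 2 ∧
      (0 < q →
        (s * (Real.sqrt q / h s)) ^ 2
          + (1 / 2) * ((Real.sqrt q / h s) ^ 2 - p) ^ 2 = (p ^ 2 - q) / 2) := by
  intro s hs
  obtain ⟨hs1, hs2⟩ := hs
  have hqs : 0 ≤ Real.sqrt q := Real.sqrt_nonneg q
  have hpsq : 0 ≤ p - Real.sqrt q := by linarith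
  have hs2' : s ^ 2 ≤ p - Real.sqrt q := by
    have := sq_le_sq' hs1 hs2
    rwa [Real.sq_sqrt hpsq] at this
  set A := p - s ^ 2 with hA
  have hAq : Real.sqrt q ≤ A := by simp only [hA]; linarith
  have hA0 : 0 ≤ A := le_trans hqs hAq
  have hA2q : q ≤ A ^ 2 := by
    have := pow_le_pow_left₀ hqs hAq 2
    rwa [Real.sq_sqrt hq0] at this
  set B := Real.sqrt (A ^ 2 - q) with hB
  have hB0 : 0 ≤ B := Real.sqrt_nonneg _
  have hB2 : B ^ 2 = A ^ 2 - q := Real.sq_sqrt (by linarith)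
  have hh2 : (h s) ^ 2 = A + B := by
    rw [hdef s]
    exact Real.sq_sqrt (by linarith)
  have e1 : (s * h s) ^ 2 = s ^ 2 * (A + B) := by rw [mul_pow, hh2]
  have hfirst : (s * h s) ^ 2 + (1 / 2) * ((h s) ^ 2 - p) ^ 2 = (p ^ 2 - q) / 2 := by
    rw [e1, hh2]
    linear_combination (1 / 2) * hB2 + (A + B) * hA
  refine ⟨hfirst, fun hq' => ?_⟩
  have hsq' : 0 < Real.sqrt q := Real.sqrt_pos.mpr hq'
  have hAB : 0 < A + B := by linarith
  have hbar : (Real.sqrt q / h s) ^ 2 = A - B := by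
    rw [div_pow, Real.sq_sqrt hq0, hh2, div_eq_iff (ne_of_gt hAB)]
    linear_combination hB2
  rw [mul_pow, hbar]
  linear_combination (1 / 2) * hB2 + (A - B) * hA
end

section
/- Let (p,q) ∈ ℐ := {(p,q) ∈ ℝ² : (p−1)² ≤ q < p²} with q > 0, let J̄ := [−√(p−√q), √(p−√q)], and for s ∈ J̄ set h(s) := h_{p,q}(s) := √(p − s² + √((p − s²)² − q)) and h̄(s) := √q / h(s). Define γ, γ̄ : J̄ → ℝ² by γ(s) = (s·h(s), (√2/2)(h(s)² − p)) and γ̄(s) = (s·h̄(s), (√2/2)(h̄(s)² − p)). Then γ(J̄) ∪ γ̄(J̄) = {z ∈ ℝ² : ‖z‖ = √((p²−q)/2)}, i.e., the union of the two curve images is the full circle of radius √((p²−q)/2) centered at the origin of ℝ². -/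
lemma aux_norm (a b : ℝ) : ‖((WithLp.equiv 2 (Fin 2 → ℝ)).symm ![a, b] : EuclideanSpace ℝ (Fin 2))‖ = Real.sqrt (a^2 + b^2) := by
  rw [EuclideanSpace.norm_eq]
  simp [Fin.sum_univ_two, sq_abs]

lemma curve_facts (p q : ℝ) (hq : 0 < q) (hsqp : Real.sqrt q < p) (h : ℝ → ℝ)
    (hdef : ∀ s, h s = Real.sqrt (p - s ^ 2 + Real.sqrt ((p - s ^ 2) ^ 2 - q)))
    (s : ℝ) (hs : s ^ 2 ≤ p - Real.sqrt q) :
    (s * h s) ^ 2 + (Real.sqrt 2 / 2 * ((h s) ^ 2 - p)) ^ 2 = (p ^ 2 - q) / 2 ∧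
    (s * (Real.sqrt q / h s)) ^ 2 +
      (Real.sqrt 2 / 2 * ((Real.sqrt q / h s) ^ 2 - p)) ^ 2 = (p ^ 2 - q) / 2 := by
  have h2 : Real.sqrt 2 ^ 2 = 2 := Real.sq_sqrt (by norm_num)
  have hq0 : 0 ≤ Real.sqrt q := Real.sqrt_nonneg q
  have hq2 : Real.sqrt q ^ 2 = q := Real.sq_sqrt hq.le
  have hA : Real.sqrt q ≤ p - s ^ 2 := by linarith
  set B := Real.sqrt ((p - s ^ 2) ^ 2 - q) with hBdef
  have hB2 : B ^ 2 = (p - s ^ 2) ^ 2 - q := Real.sq_sqrt (by nlinarith)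
  have hB0 : 0 ≤ B := Real.sqrt_nonneg _
  have hABpos : 0 < (p - s ^ 2) + B := by nlinarith [Real.sqrt_pos.mpr hq]
  have hh2 : (h s) ^ 2 = (p - s ^ 2) + B := by
    rw [hdef s, Real.sq_sqrt (by linarith)]
  have hhb2 : (Real.sqrt q / h s) ^ 2 = (p - s ^ 2) - B := by
    rw [div_pow, hq2, hh2, div_eq_iff hABpos.ne']
    linear_combination hB2
  constructor
  · rw [mul_pow, mul_pow, hh2, div_pow, h2]
    linear_combination (1/2) * hB2
  · rw [mul_pow, mul_pow, hhb2, div_pow, h2]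
    linear_combination (1/2) * hB2

set_option maxHeartbeats 1000000 in
/-- For `(p,q) ∈ ℐ` with `q > 0`, the union of the images of the curves
`γ(s) = (s h(s), (√2/2)(h(s)²−p))` and `γ̄(s) = (s h̄(s), (√2/2)(h̄(s)²−p))`, `s ∈ J̄`,
where `h = h_{p,q}` and `h̄ = √q/h`, is the full circle of radius `√((p²−q)/2)` centered
at the origin of ℝ². -/
theorem stmt_10 (p q : ℝ) (hpq1 : (p - 1) ^ 2 ≤ q) (hpq2 : q < p ^ 2) (hq : 0 < q)
    (h : ℝ → ℝ)
    (hdef : ∀ s, h s = Real.sqrt (p - s ^ 2 + Real.sqrt ((p - s ^ 2) ^ 2 - q))) :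
    (fun s : ℝ => ((WithLp.equiv 2 (Fin 2 → ℝ)).symm
        ![s * h s, Real.sqrt 2 / 2 * ((h s) ^ 2 - p)] : EuclideanSpace ℝ (Fin 2))) ''
      Set.Icc (-Real.sqrt (p - Real.sqrt q)) (Real.sqrt (p - Real.sqrt q)) ∪
    (fun s : ℝ => ((WithLp.equiv 2 (Fin 2 → ℝ)).symm
        ![s * (Real.sqrt q / h s),
          Real.sqrt 2 / 2 * ((Real.sqrt q / h s) ^ 2 - p)] : EuclideanSpace ℝ (Fin 2))) ''
      Set.Icc (-Real.sqrt (p - Real.sqrt q)) (Real.sqrt (p - Real.sqrt q)) =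
    Metric.sphere (0 : EuclideanSpace ℝ (Fin 2)) (Real.sqrt ((p ^ 2 - q) / 2)) := by
  have h2 : Real.sqrt 2 ^ 2 = 2 := Real.sq_sqrt (by norm_num)
  have hp : 0 < p := by nlinarith
  have hq2 : Real.sqrt q ^ 2 = q := Real.sq_sqrt hq.le
  have hq0 : 0 < Real.sqrt q := Real.sqrt_pos.mpr hq
  have hsqp : Real.sqrt q < p := by nlinarith [hq2, hq0]
  have hIcc : ∀ s : ℝ, s ∈ Set.Icc (-Real.sqrt (p - Real.sqrt q)) (Real.sqrt (p - Real.sqrt q)) ↔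
      s ^ 2 ≤ p - Real.sqrt q := by
    intro s
    constructor
    · rintro ⟨h1, h3⟩
      have := sq_le_sq' h1 h3
      rwa [Real.sq_sqrt (by linarith)] at this
    · intro hs
      have habs : |s| ≤ Real.sqrt (p - Real.sqrt q) := by
        rw [← Real.sqrt_sq_eq_abs]
        exact Real.sqrt_le_sqrt hs
      exact abs_le.mp habs
  ext z
  simp only [Set.mem_union, Set.mem_image, mem_sphere_zero_iff_norm]
  constructor
  · rintro (⟨s, hsI, rfl⟩ | ⟨s, hsI, rfl⟩)
    · rw [aux_norm]
      rw [(curve_facts p q hq hsqp h hdef s ((hIcc s).mp hsI)).1]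
    · rw [aux_norm]
      rw [(curve_facts p q hq hsqp h hdef s ((hIcc s).mp hsI)).2]
  · intro hz
    have hzeq : z = (WithLp.equiv 2 (Fin 2 → ℝ)).symm ![z 0, z 1] := by
      ext i; fin_cases i <;> rfl
    have hr0 : (0:ℝ) ≤ (p ^ 2 - q) / 2 := by linarith
    have hz2 : (z 0) ^ 2 + (z 1) ^ 2 = (p ^ 2 - q) / 2 := by
      have h1 : Real.sqrt ((z 0) ^ 2 + (z 1) ^ 2) = Real.sqrt ((p ^ 2 - q) / 2) := by
        rw [← aux_norm, ← hzeq]; exact hz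
      have h2' : Real.sqrt ((z 0) ^ 2 + (z 1) ^ 2) ^ 2 = Real.sqrt ((p ^ 2 - q) / 2) ^ 2 := by
        rw [h1]
      rwa [Real.sq_sqrt (by positivity), Real.sq_sqrt hr0] at h2'
    set t := p + Real.sqrt 2 * z 1 with htdef
    have hu2 : (Real.sqrt 2 * z 1) ^ 2 = 2 * (z 1) ^ 2 := by rw [mul_pow, h2]
    have hb2 : 2 * (z 1) ^ 2 ≤ p ^ 2 - q := by nlinarith [sq_nonneg (z 0)]
    have ht : 0 < t := by
      by_contra hc
      push_neg at hc
      nlinarith [hu2, hb2, hp, hq]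
    have h2t : (0:ℝ) < 2 * t := by linarith
    have hst : Real.sqrt t ≠ 0 := ne_of_gt (Real.sqrt_pos.mpr ht)
    set s := z 0 / Real.sqrt t with hsdef
    clear_value t s
    have hb : 2 * (z 1) ^ 2 = (t - p) ^ 2 := by
      rw [htdef]; linear_combination -(z 1) ^ 2 * h2
    have hsq2 : s ^ 2 = (2 * p * t - t ^ 2 - q) / (2 * t) := by
      rw [hsdef, div_pow, Real.sq_sqrt ht.le, div_eq_div_iff ht.ne' h2t.ne']
      linear_combination (2 * t) * hz2 - t * hb
    have hs : s ^ 2 ≤ p - Real.sqrt q := by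
      rw [hsq2, div_le_iff₀ h2t]
      nlinarith [sq_nonneg (t - Real.sqrt q), hq2]
    have hA : p - s ^ 2 = (t ^ 2 + q) / (2 * t) := by
      rw [hsq2]; field_simp; ring
    have hz1 : Real.sqrt 2 / 2 * (t - p) = z 1 := by
      rw [htdef]
      linear_combination (z 1 / 2) * h2
    rcases le_total (Real.sqrt q) t with hcase | hcase
    · -- t ≥ √q : first curve, h s = √t
      have hqt : q ≤ t ^ 2 := by
        calc q = Real.sqrt q ^ 2 := hq2.symm
          _ ≤ t ^ 2 := pow_le_pow_left₀ hq0.le hcase 2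
      have ht2q : 0 ≤ (t ^ 2 - q) / (2 * t) := by
        apply div_nonneg _ h2t.le
        linarith
      have hBt : Real.sqrt ((p - s ^ 2) ^ 2 - q) = (t ^ 2 - q) / (2 * t) := by
        have he : (p - s ^ 2) ^ 2 - q = ((t ^ 2 - q) / (2 * t)) ^ 2 := by
          rw [hA]; field_simp; ring
        rw [he, Real.sqrt_sq ht2q]
      have hht : h s = Real.sqrt t := by
        rw [hdef s, hBt, hA]
        congr 1
        field_simp
        ring
      have hc1 : s * h s = z 0 := by
        rw [hht, hsdef, div_mul_cancel₀ _ hst]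
      have hc2 : Real.sqrt 2 / 2 * ((h s) ^ 2 - p) = z 1 := by
        rw [hht, Real.sq_sqrt ht.le, ← hz1]
      left
      refine ⟨s, (hIcc s).mpr hs, ?_⟩
      rw [hzeq]
      congr 1
      funext i
      fin_cases i <;> simp [hc1, hc2]
    · -- t ≤ √q : second curve, √q / h s = √t
      have hqt : t ^ 2 ≤ q := by
        calc t ^ 2 ≤ Real.sqrt q ^ 2 := pow_le_pow_left₀ ht.le hcase 2
          _ = q := hq2
      have ht2q : 0 ≤ (q - t ^ 2) / (2 * t) := by
        apply div_nonneg _ h2t.le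
        linarith
      have hBt : Real.sqrt ((p - s ^ 2) ^ 2 - q) = (q - t ^ 2) / (2 * t) := by
        have he : (p - s ^ 2) ^ 2 - q = ((q - t ^ 2) / (2 * t)) ^ 2 := by
          rw [hA]; field_simp; ring
        rw [he, Real.sqrt_sq ht2q]
      have hht : h s = Real.sqrt (q / t) := by
        rw [hdef s, hBt, hA]
        congr 1
        field_simp
        ring
      have hbar : Real.sqrt q / h s = Real.sqrt t := by
        rw [hht, ← Real.sqrt_div hq.le]
        congr 1
        field_simp
      have hc1 : s * (Real.sqrt q / h s) = z 0 := by
        rw [hbar, hsdef, div_mul_cancel₀ _ hst]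
      have hc2 : Real.sqrt 2 / 2 * ((Real.sqrt q / h s) ^ 2 - p) = z 1 := by
        rw [hbar, Real.sq_sqrt ht.le, ← hz1]
      right
      refine ⟨s, (hIcc s).mpr hs, ?_⟩
      rw [hzeq]
      congr 1
      funext i
      fin_cases i <;> simp [hc1, hc2]
end

section
/- Let m ≥ 2, let (p,q) ∈ ℐ := {(p,q) ∈ ℝ² : (p−1)² ≤ q < p²} with q > 0, and set r := √((p²−q)/2), h₀ := (√2/2)·√(q−(p−1)²), x̄ := (0,…,0,√2/2) ∈ ℝ^{m+1}, J̄ := [−√(p−√q), √(p−√q)]. For s ∈ J̄ let h(s) := h_{p,q}(s) := √(p − s² + √((p − s²)² − q)) and h̄(s) := √q / h(s). Then the set A ∪ B, where A := {(s·h(s)·x, (√2/2)(h(s)² + 1 − p), h₀) ∈ ℝ^m × ℝ × ℝ : x ∈ 𝕊^{m−1}, s ∈ J̄} and B := {(s·h̄(s)·x, (√2/2)(h̄(s)² + 1 − p), h₀) : x ∈ 𝕊^{m−1}, s ∈ J̄}, equals the sphere 𝕊^m_{r,h₀} := {(y, h₀) ∈ ℝ^{m+1} × ℝ : ‖y − x̄‖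 = r}. -/
set_option maxHeartbeats 1000000 in
/-- For `m ≥ 2` and `(p,q) ∈ ℐ` with `q > 0`, set `r = √((p²−q)/2)`,
`h₀ = (√2/2)√(q−(p−1)²)`, `x̄ = (0,…,0,√2/2) ∈ ℝ^{m+1} = ℝ^m × ℝ`.  Then the union of
`A = {(s h(s) x, (√2/2)(h(s)²+1−p), h₀) : x ∈ 𝕊^{m−1}, s ∈ J̄}` and
`B = {(s h̄(s) x, (√2/2)(h̄(s)²+1−p), h₀) : x ∈ 𝕊^{m−1}, s ∈ J̄}`, with `h = h_{p,q}`,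
`h̄ = √q/h`, equals the sphere `𝕊^m_{r,h₀} = {(y,h₀) : ‖y − x̄‖ = r}` (the Euclidean
distance in `ℝ^{m+1} = ℝ^m × ℝ` being `√(‖z₁‖² + (z₂ − √2/2)²)`). -/
theorem stmt_11 (m : ℕ) (hm : 2 ≤ m) (p q : ℝ)
    (hpq1 : (p - 1) ^ 2 ≤ q) (hpq2 : q < p ^ 2) (hq : 0 < q)
    (h : ℝ → ℝ)
    (hdef : ∀ s, h s = Real.sqrt (p - s ^ 2 + Real.sqrt ((p - s ^ 2) ^ 2 - q)))
    (r h₀ : ℝ) (hr : r = Real.sqrt ((p ^ 2 - q) / 2))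
    (hh0 : h₀ = Real.sqrt 2 / 2 * Real.sqrt (q - (p - 1) ^ 2)) :
    {z : EuclideanSpace ℝ (Fin m) × ℝ × ℝ |
        ∃ (x : EuclideanSpace ℝ (Fin m)) (s : ℝ), ‖x‖ = 1 ∧
          s ∈ Set.Icc (-Real.sqrt (p - Real.sqrt q)) (Real.sqrt (p - Real.sqrt q)) ∧
          z = ((s * h s) • x, (Real.sqrt 2 / 2 * ((h s) ^ 2 + 1 - p), h₀))} ∪
    {z : EuclideanSpace ℝ (Fin m) × ℝ × ℝ |
        ∃ (x : EuclideanSpace ℝ (Fin m)) (s : ℝ), ‖x‖ = 1 ∧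
          s ∈ Set.Icc (-Real.sqrt (p - Real.sqrt q)) (Real.sqrt (p - Real.sqrt q)) ∧
          z = ((s * (Real.sqrt q / h s)) • x,
            (Real.sqrt 2 / 2 * ((Real.sqrt q / h s) ^ 2 + 1 - p), h₀))} =
    {z : EuclideanSpace ℝ (Fin m) × ℝ × ℝ |
        Real.sqrt (‖z.1‖ ^ 2 + (z.2.1 - Real.sqrt 2 / 2) ^ 2) = r ∧ z.2.2 = h₀} := by
  have h2 : Real.sqrt 2 ^ 2 = 2 := Real.sq_sqrt (by norm_num)
  have hp : (0:ℝ) < p := by nlinarith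
  have hsqq : Real.sqrt q < p := by
    have := Real.sqrt_lt_sqrt hq.le hpq2
    rwa [Real.sqrt_sq hp.le] at this
  have hsq2 : Real.sqrt q ^ 2 = q := Real.sq_sqrt hq.le
  have hsqpos : 0 < Real.sqrt q := Real.sqrt_pos.2 hq
  have hJ : (Real.sqrt (p - Real.sqrt q)) ^ 2 = p - Real.sqrt q :=
    Real.sq_sqrt (by linarith)
  have hr2 : r ^ 2 = (p ^ 2 - q) / 2 := by
    rw [hr]; exact Real.sq_sqrt (by nlinarith)
  have main : ∀ s c : ℝ,
      s ∈ Set.Icc (-Real.sqrt (p - Real.sqrt q)) (Real.sqrt (p - Real.sqrt q)) →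
      (c ^ 2 = p - s ^ 2 + Real.sqrt ((p - s ^ 2) ^ 2 - q) ∨
        c ^ 2 = p - s ^ 2 - Real.sqrt ((p - s ^ 2) ^ 2 - q)) →
      (s * c) ^ 2 + (Real.sqrt 2 / 2 * (c ^ 2 + 1 - p) - Real.sqrt 2 / 2) ^ 2
        = (p ^ 2 - q) / 2 := by
    intro s c hs hc
    set w := Real.sqrt ((p - s ^ 2) ^ 2 - q) with hwdef
    have hs2 : s ^ 2 ≤ p - Real.sqrt q := by
      nlinarith [hs.1, hs.2, hJ, Real.sqrt_nonneg (p - Real.sqrt q)]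
    have hw : w ^ 2 = (p - s ^ 2) ^ 2 - q := Real.sq_sqrt (by nlinarith)
    have e2 : (Real.sqrt 2 / 2 * (c ^ 2 + 1 - p) - Real.sqrt 2 / 2) ^ 2
        = (c ^ 2 - p) ^ 2 / 2 := by
      rw [show Real.sqrt 2 / 2 * (c ^ 2 + 1 - p) - Real.sqrt 2 / 2
          = Real.sqrt 2 / 2 * (c ^ 2 - p) by ring, mul_pow, div_pow, h2]
      ring
    rw [e2]
    rcases hc with hc | hc
    · linear_combination (s ^ 2 + (c ^ 2 + (p - s ^ 2 + w) - 2 * p) / 2) * hc + hw / 2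
    · linear_combination (s ^ 2 + (c ^ 2 + (p - s ^ 2 - w) - 2 * p) / 2) * hc + hw / 2
  ext z
  obtain ⟨z1, z2, z3⟩ := z
  simp only [Set.mem_union, Set.mem_setOf_eq, Prod.mk.injEq]
  have aux : ∀ s : ℝ,
      s ∈ Set.Icc (-Real.sqrt (p - Real.sqrt q)) (Real.sqrt (p - Real.sqrt q)) →
      s ^ 2 ≤ p - Real.sqrt q ∧
      (Real.sqrt ((p - s ^ 2) ^ 2 - q)) ^ 2 = (p - s ^ 2) ^ 2 - q ∧
      (h s) ^ 2 = p - s ^ 2 + Real.sqrt ((p - s ^ 2) ^ 2 - q) := by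
    intro s hs
    have hs2 : s ^ 2 ≤ p - Real.sqrt q := by
      nlinarith [hs.1, hs.2, hJ, Real.sqrt_nonneg (p - Real.sqrt q)]
    have hle : Real.sqrt q ≤ p - s ^ 2 := by linarith
    have hge : q ≤ (p - s ^ 2) ^ 2 := by nlinarith [hsq2, hsqpos.le]
    have hw : (Real.sqrt ((p - s ^ 2) ^ 2 - q)) ^ 2 = (p - s ^ 2) ^ 2 - q :=
      Real.sq_sqrt (by linarith)
    refine ⟨hs2, hw, ?_⟩
    rw [hdef]
    exact Real.sq_sqrt (by
      have := Real.sqrt_nonneg ((p - s ^ 2) ^ 2 - q)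
      linarith)
  constructor
  · rintro (⟨x, s, hx, hs, rfl, rfl, rfl⟩ | ⟨x, s, hx, hs, rfl, rfl, rfl⟩)
    · refine ⟨?_, rfl⟩
      obtain ⟨hs2, hw, hA⟩ := aux s hs
      have hnorm : ‖(s * h s) • x‖ ^ 2 = (s * h s) ^ 2 := by
        rw [norm_smul, hx, mul_one, Real.norm_eq_abs, sq_abs]
      rw [hnorm, main s (h s) hs (Or.inl hA), hr]
    · refine ⟨?_, rfl⟩
      obtain ⟨hs2, hw, hA⟩ := aux s hs
      have hApos : 0 < p - s ^ 2 + Real.sqrt ((p - s ^ 2) ^ 2 - q) := by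
        have := Real.sqrt_nonneg ((p - s ^ 2) ^ 2 - q)
        nlinarith [hsqpos]
      have hB : (Real.sqrt q / h s) ^ 2
          = p - s ^ 2 - Real.sqrt ((p - s ^ 2) ^ 2 - q) := by
        rw [div_pow, hsq2, hA, div_eq_iff (ne_of_gt hApos)]
        linear_combination hw
      have hnorm : ‖(s * (Real.sqrt q / h s)) • x‖ ^ 2
          = (s * (Real.sqrt q / h s)) ^ 2 := by
        rw [norm_smul, hx, mul_one, Real.norm_eq_abs, sq_abs]
      rw [hnorm, main s _ hs (Or.inr hB), hr]
  · rintro ⟨hz, hz3⟩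
    set H := Real.sqrt 2 * z2 + p - 1 with hHdef
    have hEq : ‖z1‖ ^ 2 + (z2 - Real.sqrt 2 / 2) ^ 2 = (p ^ 2 - q) / 2 := by
      have h' := Real.sq_sqrt
        (show (0:ℝ) ≤ ‖z1‖ ^ 2 + (z2 - Real.sqrt 2 / 2) ^ 2 by positivity)
      rw [hz] at h'
      rw [← h', hr2]
    have he : (z2 - Real.sqrt 2 / 2) ^ 2 = (H - p) ^ 2 / 2 := by
      have h' : z2 - Real.sqrt 2 / 2 = Real.sqrt 2 / 2 * (H - p) := by
        rw [hHdef]; linear_combination (-(z2 / 2)) * h2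
      rw [h', mul_pow, div_pow, h2]; ring
    have hrho : ‖z1‖ ^ 2 = (2 * p * H - H ^ 2 - q) / 2 := by
      linear_combination hEq - he
    have hH : 0 < H := by
      by_contra hcon
      push_neg at hcon
      nlinarith [norm_nonneg z1, sq_nonneg ‖z1‖, mul_nonneg hp.le (neg_nonneg.2 hcon)]
    have hHs : Real.sqrt H ^ 2 = H := Real.sq_sqrt hH.le
    have hHspos : 0 < Real.sqrt H := Real.sqrt_pos.2 hH
    set s : ℝ := ‖z1‖ / Real.sqrt H with hsdef
    have hs0 : 0 ≤ s := div_nonneg (norm_nonneg _) hHspos.le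
    have hpu : p - s ^ 2 = (H ^ 2 + q) / (2 * H) := by
      rw [hsdef, div_pow, hHs, hrho]
      field_simp
      ring
    have hsmem : s ∈ Set.Icc (-Real.sqrt (p - Real.sqrt q)) (Real.sqrt (p - Real.sqrt q)) := by
      constructor
      · have := Real.sqrt_nonneg (p - Real.sqrt q); linarith
      · rw [show s = Real.sqrt (s ^ 2) from (Real.sqrt_sq hs0).symm]
        apply Real.sqrt_le_sqrt
        have h2H : (p - s ^ 2) * (2 * H) = H ^ 2 + q := by
          rw [hpu]; field_simp
        nlinarith [sq_nonneg (H - Real.sqrt q), hsq2, hH, hsqpos]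
    obtain ⟨x, hx, hxz⟩ : ∃ x : EuclideanSpace ℝ (Fin m), ‖x‖ = 1 ∧ ‖z1‖ • x = z1 := by
      by_cases h0 : z1 = 0
      · refine ⟨EuclideanSpace.single (⟨0, by omega⟩ : Fin m) (1:ℝ), ?_, by simp [h0]⟩
        simp [EuclideanSpace.norm_single]
      · exact ⟨‖z1‖⁻¹ • z1, by
          rw [norm_smul, norm_inv, norm_norm, inv_mul_cancel₀ (norm_ne_zero_iff.2 h0)],
          by rw [smul_smul, mul_inv_cancel₀ (norm_ne_zero_iff.2 h0), one_smul]⟩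
    have hz2eq : z2 = Real.sqrt 2 / 2 * (H + 1 - p) := by
      rw [hHdef]; linear_combination (-(z2 / 2)) * h2
    by_cases hcase : q ≤ H ^ 2
    · left
      have hw' : Real.sqrt ((p - s ^ 2) ^ 2 - q) = (H ^ 2 - q) / (2 * H) := by
        rw [show (p - s ^ 2) ^ 2 - q = ((H ^ 2 - q) / (2 * H)) ^ 2 by
          rw [hpu]; field_simp; ring]
        exact Real.sqrt_sq (div_nonneg (by linarith) (by linarith))
      have hhs : h s = Real.sqrt H := by
        rw [hdef, hw', hpu]
        congr 1
        field_simp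
        ring
      have hsh : s * h s = ‖z1‖ := by
        rw [hhs, hsdef, div_mul_cancel₀ _ (ne_of_gt hHspos)]
      exact ⟨x, s, hx, hsmem, by rw [hsh, hxz], by rw [hhs, hHs]; exact hz2eq, hz3⟩
    · right
      push_neg at hcase
      have hw' : Real.sqrt ((p - s ^ 2) ^ 2 - q) = (q - H ^ 2) / (2 * H) := by
        rw [show (p - s ^ 2) ^ 2 - q = ((q - H ^ 2) / (2 * H)) ^ 2 by
          rw [hpu]; field_simp; ring]
        exact Real.sqrt_sq (div_nonneg (by linarith) (by linarith))
      have hhs : h s = Real.sqrt q / Real.sqrt H := by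
        rw [hdef, hw', hpu, show (H ^ 2 + q) / (2 * H) + (q - H ^ 2) / (2 * H) = q / H by
          field_simp; ring]
        rw [Real.sqrt_div hq.le, ]
      have hbar : Real.sqrt q / h s = Real.sqrt H := by
        rw [hhs, div_div_eq_mul_div, mul_comm, mul_div_assoc,
          div_self (ne_of_gt hsqpos), mul_one]
      have hsh : s * (Real.sqrt q / h s) = ‖z1‖ := by
        rw [hbar, hsdef, div_mul_cancel₀ _ (ne_of_gt hHspos)]
      exact ⟨x, s, hx, hsmem, by rw [hsh, hxz], by rw [hbar, hHs]; exact hz2eq, hz3⟩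
end

section
/- Let (p,q) and (p',q') both belong to ℐ := {(p,q) ∈ ℝ² : (p−1)² ≤ q < p²}, and suppose there is a nonempty open interval I ⊆ ℝ on which (s²−p)² − q ≠ 0, (s²−p')² − q' ≠ 0, and (p²−q)/((s²−p)²−q) = (p'²−q')/((s²−p')²−q') for all s ∈ I. Then (p,q) = (p',q'). In other words, the family of functions φ_{p,q}(s) := (p²−q)/((s²−p)²−q), (p,q) ∈ ℐ, is injective in the parameters (p,q): two members agreeing on a nonempty open interval must have equal parameters. -/
/-- The family `φ_{p,q}(s) = (p²−q)/((s²−p)²−q)`, `(p,q) ∈ ℐ`, is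
injective in the parameters: if two members agree on a nonempty open interval (on which
both denominators are nonzero), then `(p,q) = (p',q')`. -/
theorem stmt_12 (p q p' q' : ℝ)
    (h1 : (p - 1) ^ 2 ≤ q) (h2 : q < p ^ 2)
    (h1' : (p' - 1) ^ 2 ≤ q') (h2' : q' < p' ^ 2)
    (I : Set ℝ) (hIo : IsOpen I) (hIc : I.OrdConnected) (hIne : I.Nonempty)
    (hd : ∀ s ∈ I, (s ^ 2 - p) ^ 2 - q ≠ 0 ∧ (s ^ 2 - p') ^ 2 - q' ≠ 0 ∧
      (p ^ 2 - q) / ((s ^ 2 - p) ^ 2 - q) = (p' ^ 2 - q') / ((s ^ 2 - p') ^ 2 - q')) :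
    p = p' ∧ q = q' := by
  -- I is infinite
  obtain ⟨s₀, hs₀⟩ := hIne
  obtain ⟨ε, hε, hball⟩ := Metric.isOpen_iff.mp hIo s₀ hs₀
  rw [Real.ball_eq_Ioo] at hball
  have hIinf : I.Infinite :=
    (Set.Ioo_infinite (by linarith)).mono hball
  -- the polynomial
  set A := p ^ 2 - q with hA
  set A' := p' ^ 2 - q' with hA'
  have hApos : 0 < A := by simp [hA]; linarith
  have hA'pos : 0 < A' := by simp [hA']; linarith
  set P : Polynomial ℝ :=
    Polynomial.C A * ((Polynomial.X ^ 2 - Polynomial.C p') ^ 2 - Polynomial.C q')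
      - Polynomial.C A' * ((Polynomial.X ^ 2 - Polynomial.C p) ^ 2 - Polynomial.C q) with hP
  have hroot : ∀ s ∈ I, P.IsRoot s := by
    intro s hs
    obtain ⟨hd1, hd2, heq⟩ := hd s hs
    have key : A * ((s ^ 2 - p') ^ 2 - q') = A' * ((s ^ 2 - p) ^ 2 - q) := by
      have := (div_eq_div_iff hd1 hd2).mp heq
      linarith
    simp only [Polynomial.IsRoot, hP, Polynomial.eval_sub, Polynomial.eval_mul,
      Polynomial.eval_pow, Polynomial.eval_C, Polynomial.eval_X]
    linarith
  have hP0 : P = 0 := by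
    apply Polynomial.eq_zero_of_infinite_isRoot
    exact hIinf.mono fun s hs => hroot s hs
  have hall : ∀ s : ℝ, A * ((s ^ 2 - p') ^ 2 - q') = A' * ((s ^ 2 - p) ^ 2 - q) := by
    intro s
    have := congrArg (Polynomial.eval s) hP0
    simp only [Polynomial.eval_sub, Polynomial.eval_mul, Polynomial.eval_pow,
      Polynomial.eval_C, Polynomial.eval_X, Polynomial.eval_zero, hP] at this
    linarith
  have e0 := hall 0
  have e1 := hall 1
  have e2 := hall 2
  have lin1 : A - 2 * A * p' = A' - 2 * A' * p := by linear_combination e1 - e0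
  have lin2 : 16 * A - 8 * A * p' = 16 * A' - 8 * A' * p := by linear_combination e2 - e0
  have hAA' : A = A' := by linear_combination (-1/3 : ℝ) * lin1 + (1/12 : ℝ) * lin2
  have hE : A * p' = A * p := by linear_combination (-1/2 : ℝ) * lin1 + (1/2 : ℝ) * hAA' - p * hAA'
  have hpp' : p = p' := (mul_left_cancel₀ hApos.ne' hE).symm
  refine ⟨hpp', ?_⟩
  have hq : p ^ 2 - q = p' ^ 2 - q' := by rw [← hA, ← hA', hAA']
  linear_combination - hq + (p + p') * hpp'
end

section
/- Let c ∈ ℝ, let I be a nonempty open interval with 0 ∉ I, and let φ : I → ℝ be a differentiable function with φ(s) > 0 for all s ∈ I, satisfying s·φ'(s) + 2·(c²s⁴ − 1)·φ(s)² + 2·φ(s) = 0 for all s ∈ I. Then there exists c₂ ∈ ℝ such that 1/φ(s) = c²s⁴ + c₂s² + 1 for all s ∈ I. Conversely, if 1/φ(s) = c²s⁴ + c₂s² + 1 > 0 on I for some c₂ ∈ ℝ, then φ satisfies this differential equation on I. -/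
/-!
Put `u = 1/φ`. Then `s u' = -s φ'/φ²`, so the equation reads `s u' - 2u = 2c²s⁴ - 2`, an
Euler-type linear equation whose solutions are `u = c²s⁴ + c₂s² + 1`. Concretely, away from
`s = 0` the derivative of `(u - c²s⁴ - 1)/s²` is `-(s φ' + 2(c²s⁴-1)φ² + 2φ)/(s³φ²)`, so the
equation holds exactly where this quotient is locally constant.
-/

open Filter Topology

/-- The value of `c₂` read off from `1/φ(x) = c²x⁴ + c₂x² + 1`. -/
noncomputable def secondCoeff (c : ℝ) (φ : ℝ → ℝ) (x : ℝ) : ℝ :=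
  ((φ x)⁻¹ - c ^ 2 * x ^ 4 - 1) / x ^ 2

theorem hasDerivAt_secondCoeff (c : ℝ) {φ : ℝ → ℝ} {φ' s : ℝ}
    (hφ : HasDerivAt φ φ' s) (hφs : φ s ≠ 0) (hs : s ≠ 0) :
    HasDerivAt (secondCoeff c φ)
      (-(s * φ' + 2 * (c ^ 2 * s ^ 4 - 1) * φ s ^ 2 + 2 * φ s) / (s ^ 3 * φ s ^ 2)) s := by
  have hnum : HasDerivAt (fun x => (φ x)⁻¹ - c ^ 2 * x ^ 4 - 1)
      (-φ' / φ s ^ 2 - c ^ 2 * (4 * s ^ 3)) s := by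
    refine (((hφ.inv hφs).sub ((hasDerivAt_pow 4 s).const_mul (c ^ 2))).sub_const 1
      ).congr_deriv ?_
    norm_num
  have hden : HasDerivAt (fun x : ℝ => x ^ 2) (2 * s) s := by
    simpa using hasDerivAt_pow 2 s
  refine (hnum.div hden (pow_ne_zero 2 hs)).congr_deriv ?_
  field_simp
  ring

theorem secondCoeff_eq (c c₂ : ℝ) {φ : ℝ → ℝ} {x : ℝ} (hx : x ≠ 0)
    (hφ : (φ x)⁻¹ = c ^ 2 * x ^ 4 + c₂ * x ^ 2 + 1) : secondCoeff c φ x = c₂ := by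
  rw [secondCoeff, hφ]
  field_simp
  ring

theorem exists_inv_eq_quartic_of_ode {c : ℝ} {I : Set ℝ} (hIo : IsOpen I)
    (hIc : I.OrdConnected) (h0I : (0 : ℝ) ∉ I) {φ : ℝ → ℝ}
    (hdiff : ∀ s ∈ I, DifferentiableAt ℝ φ s) (hφ : ∀ s ∈ I, φ s ≠ 0)
    (hode : ∀ s ∈ I, s * deriv φ s + 2 * (c ^ 2 * s ^ 4 - 1) * (φ s) ^ 2 + 2 * φ s = 0) :
    ∃ c₂ : ℝ, ∀ s ∈ I, (φ s)⁻¹ = c ^ 2 * s ^ 4 + c₂ * s ^ 2 + 1 := by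
  have hne : ∀ s ∈ I, s ≠ 0 := fun s hs h => h0I (h ▸ hs)
  have hderiv : ∀ s ∈ I, HasDerivAt (secondCoeff c φ) 0 s := fun s hs => by
    simpa [hode s hs] using
      hasDerivAt_secondCoeff c (hdiff s hs).hasDerivAt (hφ s hs) (hne s hs)
  obtain ⟨c₂, hc₂⟩ := hIo.exists_is_const_of_deriv_eq_zero hIc.isPreconnected
    (fun s hs => (hderiv s hs).differentiableAt.differentiableWithinAt)
    (fun s hs => (hderiv s hs).deriv)
  refine ⟨c₂, fun s hs => ?_⟩
  have h := hc₂ s hs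
  rw [secondCoeff, div_eq_iff (pow_ne_zero 2 (hne s hs))] at h
  linarith

theorem ode_of_inv_eq_quartic {c c₂ : ℝ} {φ : ℝ → ℝ} {s : ℝ} (hs : s ≠ 0)
    (h : ∀ᶠ x in 𝓝 s, (φ x)⁻¹ = c ^ 2 * x ^ 4 + c₂ * x ^ 2 + 1 ∧
      0 < c ^ 2 * x ^ 4 + c₂ * x ^ 2 + 1) :
    s * deriv φ s + 2 * (c ^ 2 * s ^ 4 - 1) * (φ s) ^ 2 + 2 * φ s = 0 := by
  obtain ⟨hφs_inv, hpos⟩ := h.self_of_nhds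
  have hφs : φ s ≠ 0 := ne_of_apply_ne Inv.inv <| by
    rw [hφs_inv, inv_zero]
    exact hpos.ne'
  have hφψ : φ =ᶠ[𝓝 s] fun x => (c ^ 2 * x ^ 4 + c₂ * x ^ 2 + 1)⁻¹ :=
    h.mono fun x hx => by beta_reduce; rw [← hx.1, inv_inv]
  have hφ : HasDerivAt φ (deriv φ s) s :=
    (((by fun_prop : DifferentiableAt ℝ (fun x => c ^ 2 * x ^ 4 + c₂ * x ^ 2 + 1) s).inv
      hpos.ne').congr_of_eventuallyEq hφψ).hasDerivAt
  have hconst : HasDerivAt (secondCoeff c φ) 0 s :=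
    (hasDerivAt_const s c₂).congr_of_eventuallyEq <|
      (h.and (eventually_ne_nhds hs)).mono fun x hx => secondCoeff_eq c c₂ hx.2 hx.1.1
  have hzero := (hasDerivAt_secondCoeff c hφ hφs hs).unique hconst
  rw [neg_div, neg_eq_zero, div_eq_zero_iff] at hzero
  exact hzero.resolve_right (mul_ne_zero (pow_ne_zero 3 hs) (pow_ne_zero 2 hφs))

theorem stmt_13_general (c : ℝ) (I : Set ℝ) (hIo : IsOpen I) (hIc : I.OrdConnected)
    (h0I : (0 : ℝ) ∉ I) :
    (∀ φ : ℝ → ℝ, (∀ s ∈ I, DifferentiableAt ℝ φ s) → (∀ s ∈ I, 0 < φ s) →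
      (∀ s ∈ I, s * deriv φ s + 2 * (c ^ 2 * s ^ 4 - 1) * (φ s) ^ 2 + 2 * φ s = 0) →
      ∃ c₂ : ℝ, ∀ s ∈ I, (φ s)⁻¹ = c ^ 2 * s ^ 4 + c₂ * s ^ 2 + 1) ∧
    (∀ (φ : ℝ → ℝ) (c₂ : ℝ),
      (∀ s ∈ I, (φ s)⁻¹ = c ^ 2 * s ^ 4 + c₂ * s ^ 2 + 1 ∧
        0 < c ^ 2 * s ^ 4 + c₂ * s ^ 2 + 1) →
      ∀ s ∈ I, s * deriv φ s + 2 * (c ^ 2 * s ^ 4 - 1) * (φ s) ^ 2 + 2 * φ s = 0) := by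
  have hne : ∀ s ∈ I, s ≠ 0 := fun s hs h => h0I (h ▸ hs)
  refine ⟨fun φ hdiff hpos hode =>
    exists_inv_eq_quartic_of_ode hIo hIc h0I hdiff (fun s hs => (hpos s hs).ne') hode, ?_⟩
  intro φ c₂ h s hs
  exact ode_of_inv_eq_quartic (hne s hs) (eventually_of_mem (hIo.mem_nhds hs) h)

/-- Let `c ∈ ℝ` and let `I` be a nonempty open interval with `0 ∉ I`.
A differentiable positive function `φ` on `I` satisfies
`s φ' + 2(c²s⁴−1)φ² + 2φ = 0` on `I` if and only if `1/φ(s) = c²s⁴ + c₂s² + 1` on `I`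
for some constant `c₂` (with the right-hand side positive). -/
theorem stmt_13 (c : ℝ) (I : Set ℝ) (hIo : IsOpen I) (hIc : I.OrdConnected)
    (hIne : I.Nonempty) (h0I : (0 : ℝ) ∉ I) :
    (∀ φ : ℝ → ℝ, (∀ s ∈ I, DifferentiableAt ℝ φ s) → (∀ s ∈ I, 0 < φ s) →
      (∀ s ∈ I, s * deriv φ s + 2 * (c ^ 2 * s ^ 4 - 1) * (φ s) ^ 2 + 2 * φ s = 0) →
      ∃ c₂ : ℝ, ∀ s ∈ I, (φ s)⁻¹ = c ^ 2 * s ^ 4 + c₂ * s ^ 2 + 1) ∧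
    (∀ (φ : ℝ → ℝ) (c₂ : ℝ),
      (∀ s ∈ I, (φ s)⁻¹ = c ^ 2 * s ^ 4 + c₂ * s ^ 2 + 1 ∧
        0 < c ^ 2 * s ^ 4 + c₂ * s ^ 2 + 1) →
      ∀ s ∈ I, s * deriv φ s + 2 * (c ^ 2 * s ^ 4 - 1) * (φ s) ^ 2 + 2 * φ s = 0) :=
  stmt_13_general c I hIo hIc h0I
end

section
/- Let q, A, C, E ∈ ℝ with A ≥ 0. Then there is no nonempty open interval J ⊆ ℝ such that for all u ∈ J one has u² > q, u + √(u²−q) > 0, and A·(u + √(u²−q)) + C/(u + √(u²−q)) = −u + E. -/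
/-- For `q, A, C, E ∈ ℝ` with `A ≥ 0` there is no nonempty open
interval `J` on which `u² > q`, `u + √(u²−q) > 0` and
`A(u + √(u²−q)) + C/(u + √(u²−q)) = −u + E` hold for all `u ∈ J`. -/
theorem stmt_14 (q A C E : ℝ) (hA : 0 ≤ A) :
    ¬ ∃ J : Set ℝ, IsOpen J ∧ J.OrdConnected ∧ J.Nonempty ∧
      ∀ u ∈ J, q < u ^ 2 ∧ 0 < u + Real.sqrt (u ^ 2 - q) ∧
        A * (u + Real.sqrt (u ^ 2 - q)) + C / (u + Real.sqrt (u ^ 2 - q)) = -u + E := by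
  rintro ⟨J, hJo, -, ⟨u0, hu0⟩, hAll⟩
  obtain ⟨ε, hε, hball⟩ := Metric.isOpen_iff.mp hJo u0 hu0
  set h := ε / 2 with hh
  have hhpos : 0 < h := by positivity
  have hmem : ∀ t : ℝ, |t| < ε → u0 + t ∈ J := by
    intro t ht
    apply hball
    simpa [Real.dist_eq] using ht
  -- key identity
  have hkey : ∀ u ∈ J, (u + Real.sqrt (u ^ 2 - q)) * ((2*A+1)*u - E) = A*q - C := by
    intro u hu
    obtain ⟨h1, h2, h3⟩ := hAll u hu
    set s := Real.sqrt (u ^ 2 - q) with hs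
    have hs2 : s ^ 2 = u ^ 2 - q := Real.sq_sqrt (by linarith)
    have hf : u + s ≠ 0 := ne_of_gt h2
    field_simp at h3
    linear_combination h3 - A * hs2
  have hQ : ∀ u ∈ J, (A*q - C)^2
      = 2*u*(A*q - C)*((2*A+1)*u - E) - q*((2*A+1)*u - E)^2 := by
    intro u hu
    have hk := hkey u hu
    have h1 := (hAll u hu).1
    set s := Real.sqrt (u ^ 2 - q) with hs
    have hs2 : s ^ 2 = u ^ 2 - q := Real.sq_sqrt (by linarith)
    have hsq : (u+s)^2 = 2*u*(u+s) - q := by linear_combination hs2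
    linear_combination ((2*A+1)*u - E)^2 * hsq
      - ((A*q - C) + (u+s)*((2*A+1)*u - E) - 2*u*((2*A+1)*u - E)) * hk
  have hm1 : u0 + h ∈ J := hmem h (by rw [abs_of_pos hhpos]; linarith)
  have hm2 : u0 + (-h) ∈ J := hmem (-h) (by rw [abs_neg, abs_of_pos hhpos]; linarith)
  have Q2 := hQ u0 hu0
  have Q3 := hQ (u0 + h) hm1
  have Q1 := hQ (u0 + (-h)) hm2
  set K := A*q - C with hK
  have ha' : 2*K*(2*A+1) - q*(2*A+1)^2 = 0 := by
    have haux : (2*K*(2*A+1) - q*(2*A+1)^2) * (2*h^2) = 0 := by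
      linear_combination -Q1 - Q3 + 2*Q2
    rcases mul_eq_zero.mp haux with h' | h'
    · exact h'
    · exfalso; nlinarith
  have hb' : -2*K*E + 2*q*(2*A+1)*E = 0 := by
    have haux : (-2*K*E + 2*q*(2*A+1)*E) * (2*h) = 0 := by
      linear_combination -Q3 + Q1 - 4*u0*h*ha'
    rcases mul_eq_zero.mp haux with h' | h'
    · exact h'
    · exfalso; nlinarith
  have hc' : -q*E^2 - K^2 = 0 := by
    linear_combination -Q2 - u0^2 * ha' - u0 * hb'
  have hM : (0:ℝ) < 2*A+1 := by linarith
  have hqM : 2*K = q*(2*A+1) := by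
    have : (2*K - q*(2*A+1)) * (2*A+1) = 0 := by linear_combination ha'
    rcases mul_eq_zero.mp this with h' | h'
    · linarith
    · exfalso; linarith
  have hEK : E*K = 0 := by linear_combination hb'/2 + E*hqM
  have hK2 : K^2 * (2*A+1) = 0 := by
    linear_combination -(2*A+1)*hc' - 2*E*hEK + E^2*hqM
  have hK0 : K = 0 := by
    rcases mul_eq_zero.mp hK2 with h' | h'
    · exact pow_eq_zero_iff (by norm_num) |>.mp h'
    · exfalso; linarith
  have hq0 : q = 0 := by
    rw [hK0] at hqM
    have h0 : q * (2*A+1) = 0 := by linarith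
    rcases mul_eq_zero.mp h0 with h' | h'
    · exact h'
    · exfalso; linarith
  -- final contradiction
  have k2 := hkey u0 hu0
  have k3 := hkey (u0 + h) hm1
  rw [hK0] at k2 k3
  have f2 := (hAll u0 hu0).2.1
  have f3 := (hAll (u0+h) hm1).2.1
  have d2 : (2*A+1)*u0 - E = 0 := by
    rcases mul_eq_zero.mp k2 with h' | h'
    · exact absurd h' (ne_of_gt f2)
    · exact h'
  have d3 : (2*A+1)*(u0+h) - E = 0 := by
    rcases mul_eq_zero.mp k3 with h' | h'
    · exact absurd h' (ne_of_gt f3)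
    · exact h'
  nlinarith
end

section
/- Let p, q ∈ ℝ with q > 0 and √q < p, let J_{p,q} := (−√(p−√q), √(p−√q)) and h(s) := h_{p,q}(s) := √(p − s² + √((p − s²)² − q)). Let A, B, C ∈ ℝ and suppose there is a nonempty open interval I ⊆ J_{p,q} such that s² + A/h(s)² + B + C·h(s)² = 0 for all s ∈ I. Then A = q/2, C = 1/2 and B = −p. -/
/-- A quadratic vanishing at three points with distinct arguments has zero coefficients. -/
lemma quad_zero (c₂ c₁ c₀ x₁ x₂ x₃ : ℝ) (h12 : x₁ ≠ x₂) (h13 : x₁ ≠ x₃) (h23 : x₂ ≠ x₃)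
    (e1 : c₂ * x₁ ^ 2 + c₁ * x₁ + c₀ = 0)
    (e2 : c₂ * x₂ ^ 2 + c₁ * x₂ + c₀ = 0)
    (e3 : c₂ * x₃ ^ 2 + c₁ * x₃ + c₀ = 0) :
    c₂ = 0 ∧ c₁ = 0 ∧ c₀ = 0 := by
  have d12 : x₁ - x₂ ≠ 0 := sub_ne_zero.mpr h12
  have d13 : x₁ - x₃ ≠ 0 := sub_ne_zero.mpr h13
  have d23 : x₂ - x₃ ≠ 0 := sub_ne_zero.mpr h23
  have hc2 : c₂ * ((x₁ - x₂) * (x₁ - x₃) * (x₂ - x₃)) = 0 := by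
    linear_combination (x₂ - x₃) * e1 - (x₁ - x₃) * e2 + (x₁ - x₂) * e3
  have hc2' : c₂ = 0 := by
    rcases mul_eq_zero.mp hc2 with h | h
    · exact h
    · exact absurd h (mul_ne_zero (mul_ne_zero d12 d13) d23)
  have hc1 : c₁ * (x₁ - x₂) = 0 := by
    rw [hc2'] at e1 e2; linear_combination e1 - e2
  have hc1' : c₁ = 0 := by
    rcases mul_eq_zero.mp hc1 with h | h
    · exact h
    · exact absurd h d12
  have hc0' : c₀ = 0 := by
    rw [hc2', hc1'] at e1; linarith
  exact ⟨hc2', hc1', hc0'⟩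

/-- A nonempty open set of reals contains three points with pairwise distinct squares. -/
lemma three_points (I : Set ℝ) (hIo : IsOpen I) (hIne : I.Nonempty) :
    ∃ a b c : ℝ, a ∈ I ∧ b ∈ I ∧ c ∈ I ∧ a ^ 2 ≠ b ^ 2 ∧ a ^ 2 ≠ c ^ 2 ∧ b ^ 2 ≠ c ^ 2 := by
  obtain ⟨s₀, hs₀⟩ := hIne
  obtain ⟨ε, hε, hball⟩ := Metric.isOpen_iff.mp hIo s₀ hs₀
  rw [Real.ball_eq_Ioo] at hball
  rcases le_or_gt 0 s₀ with hsg | hsg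
  · refine ⟨s₀ + ε/4, s₀ + ε/2, s₀ + 3*ε/4, ?_, ?_, ?_, ?_, ?_, ?_⟩
    · exact hball ⟨by linarith, by linarith⟩
    · exact hball ⟨by linarith, by linarith⟩
    · exact hball ⟨by linarith, by linarith⟩
    · nlinarith
    · nlinarith
    · nlinarith
  · refine ⟨s₀ - ε/4, s₀ - ε/2, s₀ - 3*ε/4, ?_, ?_, ?_, ?_, ?_, ?_⟩
    · exact hball ⟨by linarith, by linarith⟩
    · exact hball ⟨by linarith, by linarith⟩
    · exact hball ⟨by linarith, by linarith⟩
    · nlinarith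
    · nlinarith
    · nlinarith

/-- For `q > 0`, `√q < p`, if on some nonempty open interval
`I ⊆ J_{p,q}` one has `s² + A/h(s)² + B + C h(s)² = 0` (with `h = h_{p,q}`), then
`A = q/2`, `C = 1/2` and `B = −p`. -/
theorem stmt_15 (p q : ℝ) (hq : 0 < q) (hp : Real.sqrt q < p)
    (h : ℝ → ℝ)
    (hdef : ∀ s, h s = Real.sqrt (p - s ^ 2 + Real.sqrt ((p - s ^ 2) ^ 2 - q)))
    (A B C : ℝ) (I : Set ℝ) (hIo : IsOpen I) (hIc : I.OrdConnected) (hIne : I.Nonempty)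
    (hIJ : I ⊆ Set.Ioo (-Real.sqrt (p - Real.sqrt q)) (Real.sqrt (p - Real.sqrt q)))
    (heq : ∀ s ∈ I, s ^ 2 + A / (h s) ^ 2 + B + C * (h s) ^ 2 = 0) :
    A = q / 2 ∧ C = 1 / 2 ∧ B = -p := by
  have hsq : 0 < Real.sqrt q := Real.sqrt_pos.mpr hq
  have hpsq : (0:ℝ) ≤ p - Real.sqrt q := by linarith
  -- main pointwise relation
  have hmain : ∀ s ∈ I,
      (C * q - A) ^ 2 * ((p - s ^ 2) ^ 2 - q)
        = ((q - A - C * q) * s ^ 2 + ((A + C * q) * p + B * q)) ^ 2 := by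
    intro s hs
    obtain ⟨hs1, hs2⟩ := hIJ hs
    have hs2' : s ^ 2 < p - Real.sqrt q := by
      have := sq_lt_sq' hs1 hs2
      rwa [Real.sq_sqrt hpsq] at this
    have hP : Real.sqrt q < p - s ^ 2 := by linarith
    have hPpos : (0:ℝ) < p - s ^ 2 := by linarith
    have hD : q < (p - s ^ 2) ^ 2 := by
      have := Real.sq_sqrt hq.le
      nlinarith
    set u := Real.sqrt ((p - s ^ 2) ^ 2 - q) with hu
    have hu2 : u ^ 2 = (p - s ^ 2) ^ 2 - q := Real.sq_sqrt (by linarith)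
    have hupos : 0 < u := Real.sqrt_pos.mpr (by linarith)
    have hH : (h s) ^ 2 = p - s ^ 2 + u := by
      rw [hdef s, ← hu, Real.sq_sqrt (by linarith)]
    have hHpos : 0 < (h s) ^ 2 := by rw [hH]; linarith
    have e0 : s ^ 2 * (p - s ^ 2 + u) + A + B * (p - s ^ 2 + u)
        + C * (p - s ^ 2 + u) ^ 2 = 0 := by
      have := heq s hs
      rw [hH] at this hHpos
      field_simp at this
      linarith [this]
    have e : (q - A - C * q) * s ^ 2 + ((A + C * q) * p + B * q) + (C * q - A) * u = 0 := by
      linear_combination (p - s ^ 2 - u) * e0 + (s ^ 2 + B + C * (p - s ^ 2 + u)) * hu2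
    linear_combination ((C * q - A) * u - ((q - A - C * q) * s ^ 2 + ((A + C * q) * p + B * q))) * e
      - (C * q - A) ^ 2 * hu2
  -- three points with distinct squares
  obtain ⟨a, b, c, ha, hb, hc, hab, hac, hbc⟩ := three_points I hIo hIne
  set α := C * q - A with hα
  set β := q - A - C * q with hβ
  set γ := (A + C * q) * p + B * q with hγ
  have mk : ∀ s ∈ I, (α ^ 2 - β ^ 2) * (s ^ 2) ^ 2
      + (-2 * p * α ^ 2 - 2 * β * γ) * s ^ 2 + (α ^ 2 * (p ^ 2 - q) - γ ^ 2) = 0 := by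
    intro s hs
    linear_combination hmain s hs
  obtain ⟨hc2, hc1, hc0⟩ := quad_zero (α ^ 2 - β ^ 2) (-2 * p * α ^ 2 - 2 * β * γ)
    (α ^ 2 * (p ^ 2 - q) - γ ^ 2) (a ^ 2) (b ^ 2) (c ^ 2) hab hac hbc
    (mk a ha) (mk b hb) (mk c hc)
  -- derive α = 0
  have key : α ^ 4 * q = 0 := by
    linear_combination (-(p * α ^ 2 - β * γ) / 2) * hc1 - γ ^ 2 * hc2 - α ^ 2 * hc0
  have hα0 : α = 0 := by
    have : α ^ 4 = 0 := by
      rcases mul_eq_zero.mp key with h' | h'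
      · exact h'
      · exact absurd h' hq.ne'
    exact pow_eq_zero_iff (by norm_num) |>.mp this
  have hβ0 : β = 0 := by
    have : β ^ 2 = 0 := by rw [hα0] at hc2; linarith [hc2]
    exact pow_eq_zero_iff (by norm_num) |>.mp this
  have hγ0 : γ = 0 := by
    have : γ ^ 2 = 0 := by rw [hα0] at hc0; linarith [hc0]
    exact pow_eq_zero_iff (by norm_num) |>.mp this
  rw [hα] at hα0; rw [hβ] at hβ0; rw [hγ] at hγ0
  have hA : A = q / 2 := by linarith
  have hC : C = 1 / 2 := by
    have : C * q = q / 2 := by linarith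
    field_simp at this
    have hq' : q ≠ 0 := hq.ne'
    nlinarith [this]
  have hB : B = -p := by
    have : q * (p + B) = 0 := by rw [hA, hC] at hγ0; linarith
    rcases mul_eq_zero.mp this with h' | h'
    · exact absurd h' hq.ne'
    · linarith
  exact ⟨hA, hC, hB⟩
end

section
/- Let m ≥ 1, x̄ ∈ ℝ^{m+1} with d := ‖x̄‖ > 0, r > 0, h ≥ 0, and let 𝕊^m_{r,h} := {(y,h) ∈ ℝ^{m+1} × ℝ : ‖y − x̄‖ = r} ⊂ ℝ^{m+2}. Then 0 ∈ 𝕊^m_{r,h} if and only if h = 0 and r = d. Consequently, if (r,h) ≠ (d,0), then 𝕊^m_{r,h} ⊂ ℝ^{m+2} ∖ {0}, and its preimage M^m_{r,h} := φ^{-1}(𝕊^m_{r,h}) under the homeomorphism φ : 𝕊^{m+1} × ℝ → ℝ^{m+2} ∖ {0}, φ(x,t) = e^t·x, is a compact subset of 𝕊^{m+1} × ℝ homeomorphic to the m-sphere 𝕊^m. -/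
/-! Since `φ` is a homeomorphism onto `ℝ^{m+2} ∖ {0}`, the preimage `M^m_{r,h}` is homeomorphic
to `𝕊^m_{r,h}` as soon as `0 ∉ 𝕊^m_{r,h}`. The latter is the round sphere of radius `r` about
`x̄ + h e_last` in the affine hyperplane parallel to `e_lastᗮ ≅ ℝ^{m+1}`, hence a compact copy of `𝕊^m`. -/

open Metric Real Topology

section PolarCoordinates

variable {E : Type*} [NormedAddCommGroup E] [NormedSpace ℝ E]

noncomputable def expSmulHomeomorph : sphere (0 : E) 1 × ℝ ≃ₜ ({0}ᶜ : Set E) :=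
  ((Homeomorph.refl _).prodCongr expOrderIso.toHomeomorph).trans
    (homeomorphUnitSphereProd E).symm

theorem isEmbedding_exp_smul :
    IsEmbedding fun pt : sphere (0 : E) 1 × ℝ => exp pt.2 • (pt.1 : E) :=
  IsEmbedding.subtypeVal.comp (expSmulHomeomorph (E := E)).isEmbedding

theorem range_exp_smul :
    Set.range (fun pt : sphere (0 : E) 1 × ℝ => exp pt.2 • (pt.1 : E)) = {0}ᶜ := by
  change Set.range (Subtype.val ∘ expSmulHomeomorph) = _
  rw [Set.range_comp, expSmulHomeomorph.range_coe, Set.image_univ, Subtype.range_coe]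

noncomputable def expSmulPreimageHomeomorph {S : Set E} (hS : (0 : E) ∉ S) :
    {pt : sphere (0 : E) 1 × ℝ | exp pt.2 • (pt.1 : E) ∈ S} ≃ₜ S :=
  isEmbedding_exp_smul.homeomorphOfSubsetRange <| by
    rwa [range_exp_smul, Set.subset_compl_singleton_iff]

end PolarCoordinates

section SphereInAffineSubspace

variable {E F : Type*} [NormedAddCommGroup E] [NormedSpace ℝ E]
  [NormedAddCommGroup F] [NormedSpace ℝ F]

noncomputable def homeomorphSphereOfSubmodule (K : Submodule ℝ E) (c : E) {r : ℝ} (hr : 0 < r) :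
    {z : E | z - c ∈ K ∧ ‖z - c‖ = r} ≃ₜ sphere (0 : K) 1 where
  toFun z := ⟨⟨r⁻¹ • (z.1 - c), K.smul_mem _ z.2.1⟩, by
    simp [norm_smul, z.2.2, abs_of_pos hr, hr.ne']⟩
  invFun u := ⟨c + r • (u : E), by
    have hu : ‖((u : K) : E)‖ = 1 := norm_eq_of_mem_sphere u
    simp [K.smul_mem, norm_smul, abs_of_pos hr, hu]⟩
  left_inv z := by ext; simp [smul_smul, hr.ne']
  right_inv u := by ext; simp [smul_smul, hr.ne']
  continuous_toFun := by fun_prop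
  continuous_invFun := by fun_prop

def LinearIsometryEquiv.sphereHomeomorph (e : E ≃ₗᵢ[ℝ] F) (r : ℝ) :
    sphere (0 : E) r ≃ₜ sphere (0 : F) r :=
  e.toHomeomorph.subtype fun x => by simp

end SphereInAffineSubspace

theorem stmt_17_general (m : ℕ)
    (xbar : EuclideanSpace ℝ (Fin (m + 2)))
    (hlast : xbar (Fin.last (m + 1)) = 0)
    (r h : ℝ) (hr : 0 < r)
    (S : Set (EuclideanSpace ℝ (Fin (m + 2))))
    (hS : S = {z : EuclideanSpace ℝ (Fin (m + 2)) | z (Fin.last (m + 1)) = h ∧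
        ‖z - (xbar + h • EuclideanSpace.single (Fin.last (m + 1)) (1 : ℝ))‖ = r}) :
    ((0 : EuclideanSpace ℝ (Fin (m + 2))) ∈ S ↔ h = 0 ∧ r = ‖xbar‖) ∧
    ((r, h) ≠ (‖xbar‖, 0) →
      (0 : EuclideanSpace ℝ (Fin (m + 2))) ∉ S ∧
      IsCompact {pt : Metric.sphere (0 : EuclideanSpace ℝ (Fin (m + 2))) 1 × ℝ |
          Real.exp pt.2 • (pt.1 : EuclideanSpace ℝ (Fin (m + 2))) ∈ S} ∧
      Nonempty
        ({pt : Metric.sphere (0 : EuclideanSpace ℝ (Fin (m + 2))) 1 × ℝ |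
            Real.exp pt.2 • (pt.1 : EuclideanSpace ℝ (Fin (m + 2))) ∈ S} ≃ₜ
          Metric.sphere (0 : EuclideanSpace ℝ (Fin (m + 1))) 1)) := by
  set e := EuclideanSpace.single (Fin.last (m + 1)) (1 : ℝ)
  have hmem0 : (0 : EuclideanSpace ℝ (Fin (m + 2))) ∈ S ↔ h = 0 ∧ r = ‖xbar‖ := by
    subst hS
    constructor
    · rintro ⟨rfl, hnorm⟩
      simpa [eq_comm] using hnorm
    · rintro ⟨rfl, rfl⟩
      simp
  have hS' : S = {z | z - (xbar + h • e) ∈ (ℝ ∙ e)ᗮ ∧ ‖z - (xbar + h • e)‖ = r} := by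
    subst hS
    ext z
    simp [Submodule.mem_orthogonal_singleton_iff_inner_right, e, EuclideanSpace.inner_single_left, hlast, sub_eq_zero]
  refine ⟨hmem0, fun hne => ?_⟩
  have h0 : (0 : EuclideanSpace ℝ (Fin (m + 2))) ∉ S := fun h0 => by
    obtain ⟨rfl, rfl⟩ := hmem0.1 h0
    exact hne rfl
  have : Fact (Module.finrank ℝ (EuclideanSpace ℝ (Fin (m + 2))) = m + 1 + 1) :=
    ⟨finrank_euclideanSpace_fin⟩
  have he : e ≠ 0 := by simp [e]
  let Φ := (expSmulPreimageHomeomorph h0).trans <| (Homeomorph.setCongr hS').trans <|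
    (homeomorphSphereOfSubmodule _ _ hr).trans <|
      (OrthonormalBasis.fromOrthogonalSpanSingleton (m + 1) he).repr.sphereHomeomorph 1
  exact ⟨h0, isCompact_iff_compactSpace.2 Φ.symm.compactSpace, ⟨Φ⟩⟩

/-- Let `m ≥ 1`, let `x̄ ∈ ℝ^{m+1} ⊂ ℝ^{m+2}` (last coordinate `0`) with
`d = ‖x̄‖ > 0`, `r > 0`, `h ≥ 0`, and let
`𝕊^m_{r,h} = {z ∈ ℝ^{m+2} : z_{last} = h, ‖z − (x̄ + h e_{last})‖ = r}`.  Then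
`0 ∈ 𝕊^m_{r,h} ↔ h = 0 ∧ r = d`.  Consequently, if `(r,h) ≠ (d,0)`, then
`𝕊^m_{r,h} ⊆ ℝ^{m+2} ∖ {0}` and its preimage `M^m_{r,h}` under the homeomorphism
`φ : 𝕊^{m+1} × ℝ → ℝ^{m+2} ∖ {0}`, `φ(x,t) = e^t x`, is compact and homeomorphic
to the `m`-sphere `𝕊^m`. -/
theorem stmt_17 (m : ℕ) (hm : 1 ≤ m)
    (xbar : EuclideanSpace ℝ (Fin (m + 2)))
    (hlast : xbar (Fin.last (m + 1)) = 0)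
    (hd : 0 < ‖xbar‖) (r h : ℝ) (hr : 0 < r) (hh : 0 ≤ h)
    (S : Set (EuclideanSpace ℝ (Fin (m + 2))))
    (hS : S = {z : EuclideanSpace ℝ (Fin (m + 2)) | z (Fin.last (m + 1)) = h ∧
        ‖z - (xbar + h • EuclideanSpace.single (Fin.last (m + 1)) (1 : ℝ))‖ = r}) :
    ((0 : EuclideanSpace ℝ (Fin (m + 2))) ∈ S ↔ h = 0 ∧ r = ‖xbar‖) ∧
    ((r, h) ≠ (‖xbar‖, 0) →
      (0 : EuclideanSpace ℝ (Fin (m + 2))) ∉ S ∧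
      IsCompact {pt : Metric.sphere (0 : EuclideanSpace ℝ (Fin (m + 2))) 1 × ℝ |
          Real.exp pt.2 • (pt.1 : EuclideanSpace ℝ (Fin (m + 2))) ∈ S} ∧
      Nonempty
        ({pt : Metric.sphere (0 : EuclideanSpace ℝ (Fin (m + 2))) 1 × ℝ |
            Real.exp pt.2 • (pt.1 : EuclideanSpace ℝ (Fin (m + 2))) ∈ S} ≃ₜ
          Metric.sphere (0 : EuclideanSpace ℝ (Fin (m + 1))) 1)) :=
  stmt_17_general m xbar hlast r h hr S hS
end
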